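/- arXiv:2012.07402 — 9 statements merged into one kernel-verified Lean document; each statement's English description precedes it below -/
import Mathlib

section
/- Suppose Φ : GL_n(F) → N is a continuous map such that Φ(g·p) = Φ(g) for all g ∈ GL_n(F) and p ∈ P, and such that for every g ∈ GL_n(F) there exists an element c(g) ∈ N with Φ(g·g') = c(g) + Φ(g') for all g' ∈ GL_n(F). Then Φ is constant. (Under the identification of the Grassmannian Gr_{r,n}(F) with GL_n(F)/P, this says that the group of PGL_n(F)-invariants of the generalized Steinberg representation v_r(N) = C(Gr_{r,n}(F), N)/N is zero.) -/
open Matrix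

/-- The submodule of `Fin n → F` spanned by the first `r` standard basis vectors. -/
def stdFlag (F : Type*) [Field F] (n r : ℕ) : Submodule F (Fin n → F) where
  carrier := {v | ∀ i : Fin n, r ≤ (i : ℕ) → v i = 0}
  add_mem' := fun {a b} ha hb i hi => by simp [ha i hi, hb i hi]
  zero_mem' := fun i _ => rfl
  smul_mem' := fun c {v} hv i hi => by simp [hv i hi]

/-- The block upper-triangularity condition cutting out the maximal parabolic of type
`(r, n-r)`: the `(i,j)` entry vanishes whenever `i ≥ r` and `j < r`. -/
def IsParMat {F : Type*} [Field F] {n : ℕ} (r : ℕ) (M : Matrix (Fin n) (Fin n) F) : Prop :=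
  ∀ i j : Fin n, r ≤ (i : ℕ) → (j : ℕ) < r → M i j = 0

lemma isParMat_iff_mapsTo {F : Type*} [Field F] {n r : ℕ} {M : Matrix (Fin n) (Fin n) F} :
    IsParMat r M ↔ ∀ v ∈ stdFlag F n r, M.mulVec v ∈ stdFlag F n r := by
  constructor
  · intro h v hv i hi
    simp only [Matrix.mulVec, dotProduct]
    refine Finset.sum_eq_zero fun j _ => ?_
    rcases lt_or_ge (j : ℕ) r with hj | hj
    · rw [h i j hi hj, zero_mul]
    · rw [hv j hj, mul_zero]
  · intro h i j hi hj
    have hmem : (Pi.single j (1 : F)) ∈ stdFlag F n r := by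
      intro k hk
      apply Pi.single_eq_of_ne
      intro hkj
      rw [hkj] at hk
      omega
    have h2 := h _ hmem i hi
    rw [Matrix.mulVec_single] at h2
    simpa using h2

/-- The maximal parabolic subgroup of `GL_n(F)` of type `(r, n-r)`: block upper-triangular
invertible matrices, i.e. the stabilizer of the span of the first `r` standard basis vectors. -/
def Parabolic (F : Type*) [Field F] (n r : ℕ) : Subgroup (GL (Fin n) F) where
  carrier := {g | IsParMat r (g : Matrix (Fin n) (Fin n) F)}
  one_mem' := by
    intro i j hi hj
    have hne : i ≠ j := by
      intro h; rw [h] at hi; omega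
    exact Matrix.one_apply_ne hne
  mul_mem' := by
    intro a b ha hb i j hi hj
    show ((a : Matrix (Fin n) (Fin n) F) * b) i j = 0
    rw [Matrix.mul_apply]
    refine Finset.sum_eq_zero fun k _ => ?_
    rcases lt_or_ge (k : ℕ) r with hk | hk
    · rw [ha i k hi hk, zero_mul]
    · rw [hb k j hk hj, mul_zero]
  inv_mem' := by
    intro g hg
    have hres : ∀ v ∈ stdFlag F n r,
        (Matrix.toLin' (g : Matrix (Fin n) (Fin n) F)) v ∈ stdFlag F n r := by
      intro v hv
      simpa [Matrix.toLin'_apply] using isParMat_iff_mapsTo.mp hg v hv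
    set f := (Matrix.toLin' (g : Matrix (Fin n) (Fin n) F)).restrict hres with hf
    have hginj : Function.Injective ((g : Matrix (Fin n) (Fin n) F).mulVec) :=
      Matrix.mulVec_injective_iff_isUnit.mpr ⟨g, rfl⟩
    have hinj : Function.Injective f := by
      intro x y hxy
      apply Subtype.ext
      apply hginj
      have h3 := congrArg Subtype.val hxy
      simpa [hf, LinearMap.restrict_apply, Matrix.toLin'_apply] using h3
    have hsurj := (LinearMap.injective_iff_surjective (f := f)).mp hinj
    rw [Set.mem_setOf_eq, isParMat_iff_mapsTo]
    intro v hv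
    obtain ⟨w, hw⟩ := hsurj ⟨v, hv⟩
    have hw' : (g : Matrix (Fin n) (Fin n) F).mulVec w.1 = v := by
      have h4 := congrArg Subtype.val hw
      simpa [hf, LinearMap.restrict_apply, Matrix.toLin'_apply] using h4
    have hcalc : ((g⁻¹ : GL (Fin n) F) : Matrix (Fin n) (Fin n) F).mulVec v = w.1 := by
      rw [← hw', Matrix.mulVec_mulVec, ← Units.val_mul, inv_mul_cancel, Units.val_one,
        Matrix.one_mulVec]
    rw [hcalc]
    exact w.2

/-!
Normalised at the identity, `Φ` becomes a homomorphism from `GL_n(F)` to the abelian group `N`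
that kills `P`, in particular every invertible diagonal matrix. As `F` has an element
`t ≠ 0, 1`, every transvection is a commutator, so it is killed as well; and `GL_n(F)` is
generated by transvections and invertible diagonal matrices.
-/

namespace Matrix

variable {ι F : Type*} [Fintype ι] [DecidableEq ι] [Field F]

theorem diagonal_update_mul_transvection {i j : ι} (hij : i ≠ j) {t : F} (ht1 : t ≠ 1) (c : F) :
    diagonal (Function.update 1 i t) * transvection i j (c / (t - 1)) =
      transvection i j c * transvection i j (c / (t - 1)) *
        diagonal (Function.update 1 i t) := by
  have hμ : t * (c / (t - 1)) = c + c / (t - 1) := by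
    field_simp [sub_ne_zero.mpr ht1]; ring
  rw [transvection_mul_transvection_same _ _ hij]
  ext a b
  rw [diagonal_mul, mul_diagonal]
  by_cases hab : a = b
  · subst hab
    have : ¬(i = a ∧ j = a) := fun h => hij (h.1.trans h.2.symm)
    simp [transvection, this]
  · by_cases hc : i = a ∧ j = b
    · obtain ⟨rfl, rfl⟩ := hc
      simp [transvection, hab, hij.symm, hμ]
    · simp [transvection, hab, hc]

namespace GeneralLinearGroup

open scoped commutatorElement

/-- Conjugation by `diag(1, …, t, …, 1)` multiplies the coefficient of a transvection by `t`,
so the transvection by `c` is the commutator of that diagonal matrix with the transvection by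
`c / (t - 1)`. -/
theorem mem_commutator_of_coe_eq_transvection {t : F} (ht0 : t ≠ 0) (ht1 : t ≠ 1) {i j : ι}
    (hij : i ≠ j) (c : F) {g : GL ι F} (hg : (g : Matrix ι ι F) = transvection i j c) :
    g ∈ commutator (GL ι F) := by
  have hdet : (diagonal (Function.update 1 i t)).det ≠ 0 := by
    rw [det_diagonal, Finset.prod_ne_zero_iff]
    intro k _
    rcases eq_or_ne k i with rfl | hk
    · simpa using ht0
    · simp [hk]
  set d := mkOfDetNeZero _ hdet
  set u := mkOfDetNeZero (transvection i j (c / (t - 1))) (by simp [det_transvection_of_ne, hij])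
  have hcomm : ⁅d, u⁆ = g := by
    rw [commutatorElement_def, mul_inv_eq_iff_eq_mul, mul_inv_eq_iff_eq_mul]
    ext : 1
    simp only [Units.val_mul, hg, d, u, val_mkOfDetNeZero]
    exact diagonal_update_mul_transvection hij ht1 c
  exact hcomm ▸ Subgroup.commutator_mem_commutator (Subgroup.mem_top d) (Subgroup.mem_top u)

theorem monoidHom_eq_one_of_isDiag {A : Type*} [CommGroup A] {t : F} (ht0 : t ≠ 0)
    (ht1 : t ≠ 1) (f : GL ι F →* A) (hf : ∀ g : GL ι F, (g : Matrix ι ι F).IsDiag → f g = 1) :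
    f = 1 := by
  ext g
  refine diagonal_transvection_induction_of_det_ne_zero
    (fun M => ∀ g : GL ι F, (g : Matrix ι ι F) = M → f g = 1) g (det_ne_zero g) ?_ ?_ ?_ g rfl
  · rintro D - g hg
    exact hf g (hg ▸ isDiag_diagonal D)
  · rintro ⟨i, j, hij, c⟩ g hg
    exact Abelianization.commutator_subset_ker f
      (mem_commutator_of_coe_eq_transvection ht0 ht1 hij c hg)
  · rintro A B hA hB hfA hfB g hg
    have : g = mkOfDetNeZero A hA * mkOfDetNeZero B hB := by ext : 1; simp [hg]
    rw [this, map_mul, hfA _ rfl, hfB _ rfl, one_mul]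

end GeneralLinearGroup

end Matrix

def MonoidHom.ofQuasiHom {G N : Type*} [Group G] [AddCommGroup N] (Φ : G → N)
    (hΦ : ∀ g, ∃ c, ∀ g', Φ (g * g') = c + Φ g') : G →* Multiplicative N :=
  MonoidHom.mk' (fun g => Multiplicative.ofAdd (Φ g - Φ 1)) fun a b => by
    obtain ⟨c, hc⟩ := hΦ a
    have hc1 : Φ a = c + Φ 1 := by simpa using hc 1
    rw [← ofAdd_add, hc, hc1]
    abel_nf

theorem MonoidHom.ofQuasiHom_apply {G N : Type*} [Group G] [AddCommGroup N] (Φ : G → N)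
    (hΦ : ∀ g, ∃ c, ∀ g', Φ (g * g') = c + Φ g') (g : G) :
    MonoidHom.ofQuasiHom Φ hΦ g = Multiplicative.ofAdd (Φ g - Φ 1) :=
  rfl

theorem isParMat_of_isDiag {F : Type*} [Field F] {n : ℕ} (r : ℕ)
    {M : Matrix (Fin n) (Fin n) F} (hM : M.IsDiag) : IsParMat r M :=
  fun _ _ hi hj => hM (Fin.ne_of_val_ne (by omega))

theorem steinberg_invariants_eq_zero_general
    {F : Type*} [NontriviallyNormedField F]
    {n r : ℕ}
    {N : Type*} [AddCommGroup N]
    (Φ : GL (Fin n) F → N)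
    (hright : ∀ g p : GL (Fin n) F, p ∈ Parabolic F n r → Φ (g * p) = Φ g)
    (hquasi : ∀ g : GL (Fin n) F, ∃ c : N, ∀ g' : GL (Fin n) F, Φ (g * g') = c + Φ g') :
    ∀ g g' : GL (Fin n) F, Φ g = Φ g' := by
  obtain ⟨t, ht⟩ := NormedField.exists_one_lt_norm F
  have ht0 : t ≠ 0 := norm_pos_iff.mp (one_pos.trans ht)
  have ht1 : t ≠ 1 := fun h => by simp [h] at ht
  have hf : MonoidHom.ofQuasiHom Φ hquasi = 1 :=
    Matrix.GeneralLinearGroup.monoidHom_eq_one_of_isDiag ht0 ht1 _ fun p hp => by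
      rw [MonoidHom.ofQuasiHom_apply, ← hright 1 p (isParMat_of_isDiag r hp), one_mul, sub_self,
        ofAdd_zero]
  have hΦ (g : GL (Fin n) F) : Φ g = Φ 1 := by
    have := DFunLike.congr_fun hf g
    rwa [MonoidHom.ofQuasiHom_apply, MonoidHom.one_apply, ofAdd_eq_one, sub_eq_zero] at this
  exact fun g g' => (hΦ g).trans (hΦ g').symm

/-- A continuous right-`P`-invariant function on `GL_n(F)` which is a
"quasi-homomorphism" (each left translate differs from it by a constant) is constant:
the `PGL_n(F)`-invariants of the generalized Steinberg representation
`v_r(N) = C(Gr_{r,n}(F), N)/N` vanish. -/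
theorem steinberg_invariants_eq_zero
    {F : Type*} [NontriviallyNormedField F] [IsUltrametricDist F]
    [CompleteSpace F] [LocallyCompactSpace F]
    {n r : ℕ} (hn : 2 ≤ n) (hr : 0 < r) (hrn : r < n)
    {N : Type*} [AddCommGroup N] [TopologicalSpace N] [IsTopologicalAddGroup N]
    (Φ : GL (Fin n) F → N) (hΦcont : Continuous Φ)
    (hright : ∀ g p : GL (Fin n) F, p ∈ Parabolic F n r → Φ (g * p) = Φ g)
    (hquasi : ∀ g : GL (Fin n) F, ∃ c : N, ∀ g' : GL (Fin n) F, Φ (g * g') = c + Φ g') :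
    ∀ g g' : GL (Fin n) F, Φ g = Φ g' :=
  steinberg_invariants_eq_zero_general Φ hright hquasi
end

section
/- There exist finitely many closed subsets U₁, …, U_m of GL_n(F) such that for each i the multiplication map U_i × P → GL_n(F), (u,p) ↦ u·p, is injective and a homeomorphism onto its image, the images U_i·P are open in GL_n(F) and pairwise disjoint, and their union is all of GL_n(F). -/
open Matrix

/-!
For a permutation `π`, let `μ_π(g)` be the minor of the first `r` columns of `g` in the rows
`π 0, …, π (r-1)`. Right multiplication by `p ∈ P` multiplies every `μ_π` by the same unit
`det p₁₁`, so the set of `g` for which `π` is the first index where `‖μ_π(g)‖` is maximal is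
`P`-stable. By the ultrametric inequality these sets are open; as they partition `GL_n(F)`, they
are also closed.

Where the top-left block `a` of `g = [[a, b], [c, d]]` is invertible, `σ(g) = [[1, 0], [c a⁻¹, 1]]`
depends continuously on `g` and only on the coset `gP`, and `σ(g)⁻¹ g = [[a, b], [0, d - c a⁻¹ b]]`
lies in `P`. Translating by the permutation matrix of `π` carries this section to the set of `π`,
and the fixed points of the section form the closed set `U`.
-/

open scoped Pointwise
open Topology Function

theorem Matrix.exists_injective_isUnit_submatrix_of_mul_eq_one {K m ι : Type*} [Field K]
    [Fintype m] [Fintype ι] [DecidableEq ι] {A : Matrix m ι K} {B : Matrix ι m K}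
    (hBA : B * A = 1) : ∃ s : ι → m, Injective s ∧ IsUnit (A.submatrix s id) := by
  have hspan : Submodule.span K (Set.range A.row) = ⊤ := by
    refine eq_top_iff.mpr fun y _ => ?_
    have hy : y = (y ᵥ* B) ᵥ* A := by rw [vecMul_vecMul, hBA, vecMul_one]
    rw [hy, vecMul_eq_sum]
    exact Submodule.sum_mem _ fun i _ =>
      Submodule.smul_mem _ _ (Submodule.subset_span (Set.mem_range_self i))
  obtain ⟨κ, a, ha, haspan, hali⟩ := exists_linearIndependent' K A.row
  let e := (Module.Basis.mk hali (by rw [haspan, hspan])).indexEquiv (Pi.basisFun K ι)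
  exact ⟨a ∘ e.symm, ha.comp e.symm.injective,
    linearIndependent_rows_iff_isUnit.mp (hali.comp e.symm e.symm.injective)⟩

theorem Fin.exists_perm_castLE_eq {n r : ℕ} (hrn : r ≤ n) {s : Fin r → Fin n}
    (hs : Injective s) : ∃ τ : Equiv.Perm (Fin n), ∀ i, τ (Fin.castLE hrn i) = s i := by
  classical
  let e := (Equiv.ofInjective _ (Fin.castLE_injective hrn)).symm.trans (Equiv.ofInjective s hs)
  refine ⟨e.extendSubtype, fun i => ?_⟩
  rw [Equiv.extendSubtype_apply_of_mem e _ (Set.mem_range_self i)]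
  simp [e]

theorem isClosed_of_isOpen_of_iUnion_eq_univ {X ι : Type*} [TopologicalSpace X] {C : ι → Set X}
    (hopen : ∀ i, IsOpen (C i)) (hdisj : Pairwise (Disjoint on C))
    (hcover : ⋃ i, C i = Set.univ) (i : ι) : IsClosed (C i) := by
  have hcompl : (C i)ᶜ = ⋃ (j) (_ : j ≠ i), C j := by
    ext x
    obtain ⟨j, hj⟩ := Set.mem_iUnion.mp (hcover.ge (Set.mem_univ x))
    simp only [Set.mem_compl_iff, Set.mem_iUnion]
    refine ⟨fun hx => ⟨j, fun hji => hx (hji ▸ hj), hj⟩, ?_⟩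
    rintro ⟨k, hki, hk⟩ hx
    exact Set.disjoint_left.mp (hdisj hki) hk hx
  rw [← isOpen_compl_iff, hcompl]
  exact isOpen_biUnion fun j _ => hopen j

section LocalSection

variable {G : Type*} [Group G] [TopologicalSpace G]

structure IsLocalSection (P : Subgroup G) (C : Set G) (σ : G → G) : Prop where
  mul_mem : ∀ g ∈ C, ∀ p ∈ P, g * p ∈ C
  inv_mul_mem : ∀ g ∈ C, (σ g)⁻¹ * g ∈ P
  apply_mul : ∀ g ∈ C, ∀ p ∈ P, σ (g * p) = σ g
  continuousOn : ContinuousOn σ C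

def transversal (C : Set G) (σ : G → G) : Set G := {g ∈ C | σ g = g}

namespace IsLocalSection

variable {P : Subgroup G} {C : Set G} {σ : G → G}

theorem apply_mem (h : IsLocalSection P C σ) {g : G} (hg : g ∈ C) : σ g ∈ C := by
  simpa using h.mul_mem g hg _ (inv_mem (h.inv_mul_mem g hg))

theorem apply_apply (h : IsLocalSection P C σ) {g : G} (hg : g ∈ C) : σ (σ g) = σ g := by
  simpa using h.apply_mul g hg _ (inv_mem (h.inv_mul_mem g hg))

theorem apply_mem_transversal (h : IsLocalSection P C σ) {g : G} (hg : g ∈ C) :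
    σ g ∈ transversal C σ :=
  ⟨h.apply_mem hg, h.apply_apply hg⟩

theorem transversal_mul_eq (h : IsLocalSection P C σ) : transversal C σ * (P : Set G) = C := by
  ext g
  refine ⟨?_, fun hg => ⟨σ g, h.apply_mem_transversal hg, _, h.inv_mul_mem g hg, by group⟩⟩
  rintro ⟨u, hu, p, hp, rfl⟩
  exact h.mul_mem u hu.1 p hp

theorem isEmbedding_mul [IsTopologicalGroup G] (h : IsLocalSection P C σ) :
    IsEmbedding fun q : transversal C σ × P => (q.1 : G) * q.2 := by
  let mul : transversal C σ × P → C := fun q => ⟨q.1 * q.2, h.mul_mem _ q.1.2.1 _ q.2.2⟩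
  let split : C → transversal C σ × P := fun g =>
    (⟨σ g, h.apply_mem_transversal g.2⟩, ⟨(σ g)⁻¹ * g, h.inv_mul_mem g g.2⟩)
  have hσ : Continuous fun g : C => σ g := h.continuousOn.domRestrict
  have hsplit : LeftInverse split mul := by
    rintro ⟨⟨u, hu⟩, ⟨p, hp⟩⟩
    have hσup : σ (u * p) = u := (h.apply_mul u hu.1 p hp).trans hu.2
    ext <;> simp [split, mul, hσup]
  refine IsEmbedding.subtypeVal.comp (hsplit.isEmbedding ?_ (by fun_prop))
  exact (hσ.subtype_mk _).prodMk ((hσ.inv.mul continuous_subtype_val).subtype_mk _)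

theorem isClosed_transversal [T2Space G] (h : IsLocalSection P C σ) (hC : IsClosed C) :
    IsClosed (transversal C σ) :=
  (h.continuousOn.prodMk continuousOn_id).preimage_isClosed_of_isClosed hC isClosed_diagonal

theorem mono {C' : Set G} (h : IsLocalSection P C σ) (hC' : C' ⊆ C)
    (hmul : ∀ g ∈ C', ∀ p ∈ P, g * p ∈ C') : IsLocalSection P C' σ where
  mul_mem := hmul
  inv_mul_mem g hg := h.inv_mul_mem g (hC' hg)
  apply_mul g hg := h.apply_mul g (hC' hg)
  continuousOn := h.continuousOn.mono hC'

theorem leftTranslate [ContinuousMul G] (h : IsLocalSection P C σ) (w : G) :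
    IsLocalSection P ((w * ·) ⁻¹' C) (fun g => w⁻¹ * σ (w * g)) where
  mul_mem g hg p hp := by simpa [mul_assoc] using h.mul_mem _ hg p hp
  inv_mul_mem g hg := by simpa [mul_assoc] using h.inv_mul_mem _ hg
  apply_mul g hg p hp := by simp only [← mul_assoc, h.apply_mul _ hg p hp]
  continuousOn := continuousOn_const.mul
    (h.continuousOn.comp (continuous_const_mul w).continuousOn fun _ hg => hg)

end IsLocalSection

theorem exists_closed_transversals [IsTopologicalGroup G] [T2Space G] {P : Subgroup G} {m : ℕ}
    {C : Fin m → Set G} {σ : Fin m → G → G} (hσ : ∀ i, IsLocalSection P (C i) (σ i))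
    (hopen : ∀ i, IsOpen (C i)) (hdisj : Pairwise (Disjoint on C))
    (hcover : ⋃ i, C i = Set.univ) :
    ∃ U : Fin m → Set G,
      (∀ i, IsClosed (U i)) ∧
      (∀ i, IsEmbedding fun q : U i × P => (q.1 : G) * q.2) ∧
      (∀ i, IsOpen (U i * (P : Set G))) ∧
      (Pairwise fun i j => Disjoint (U i * (P : Set G)) (U j * (P : Set G))) ∧
      (⋃ i, U i * (P : Set G)) = Set.univ := by
  refine ⟨fun i => transversal (C i) (σ i), fun i => (hσ i).isClosed_transversal
    (isClosed_of_isOpen_of_iUnion_eq_univ hopen hdisj hcover i),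
    fun i => (hσ i).isEmbedding_mul, ?_⟩
  simp only [fun i => (hσ i).transversal_mul_eq]
  exact ⟨hopen, hdisj, hcover⟩

end LocalSection

section FirstMaxNorm

variable {X ι E : Type*} [LinearOrder ι] [NormedAddCommGroup E]

def firstMaxNormSet (f : ι → X → E) (i : ι) : Set X :=
  {x | ∀ j, ‖f j x‖ ≤ ‖f i x‖ ∧ (j < i → ‖f j x‖ < ‖f i x‖)}

variable {f : ι → X → E}

theorem pairwise_disjoint_firstMaxNormSet : Pairwise (Disjoint on firstMaxNormSet f) := by
  intro i j hij
  refine Set.disjoint_left.mpr fun x hi hj => ?_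
  rcases hij.lt_or_gt with h | h
  · exact ((hj i).2 h).not_ge (hi j).1
  · exact ((hi j).2 h).not_ge (hj i).1

theorem iUnion_firstMaxNormSet [Finite ι] [Nonempty ι] :
    ⋃ i, firstMaxNormSet f i = Set.univ := by
  refine Set.eq_univ_of_forall fun x => Set.mem_iUnion.mpr ?_
  obtain ⟨i, hi⟩ := Finite.exists_max fun j => toLex (‖f j x‖, OrderDual.toDual j)
  refine ⟨i, fun j => ?_⟩
  have hji := Prod.Lex.toLex_le_toLex.mp (hi j)
  simp only [OrderDual.toDual_le_toDual] at hji
  exact ⟨hji.elim le_of_lt fun h => h.1.le,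
    fun hlt => hji.resolve_right fun h => h.2.not_gt hlt⟩

theorem firstMaxNormSet_of_norm_eq_mul {x y : X} {a : ℝ} (ha : 0 < a)
    (h : ∀ j, ‖f j y‖ = a * ‖f j x‖) {i : ι} (hx : x ∈ firstMaxNormSet f i) :
    y ∈ firstMaxNormSet f i := fun j => by
  simp only [h]
  exact ⟨mul_le_mul_of_nonneg_left (hx j).1 ha.le,
    fun hj => mul_lt_mul_of_pos_left ((hx j).2 hj) ha⟩

theorem ne_zero_of_mem_firstMaxNormSet (hf : ∀ x, ∃ j, f j x ≠ 0) {i : ι} {x : X}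
    (hx : x ∈ firstMaxNormSet f i) : f i x ≠ 0 := by
  obtain ⟨j, hj⟩ := hf x
  exact norm_pos_iff.mp ((norm_pos_iff.mpr hj).trans_le (hx j).1)

theorem isOpen_firstMaxNormSet [TopologicalSpace X] [Finite ι] [IsUltrametricDist E]
    (hcont : ∀ j, Continuous (f j)) (hf : ∀ x, ∃ j, f j x ≠ 0) (i : ι) :
    IsOpen (firstMaxNormSet f i) := by
  refine isOpen_iff_forall_mem_open.mpr fun x hx => ?_
  set c := ‖f i x‖
  have hc : 0 < c := norm_pos_iff.mpr (ne_zero_of_mem_firstMaxNormSet hf hx)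
  have hmax (a b : E) : ‖a‖ ≤ max ‖a - b‖ ‖b‖ := by
    simpa using IsUltrametricDist.norm_add_le_max (a - b) b
  -- moving each `f j` by less than `c` preserves how its norm compares with `c`
  refine ⟨⋂ j, {y | ‖f j y - f j x‖ < c}, fun y hy => ?_, ?_, by simpa using fun _ => hc⟩
  · simp only [Set.mem_iInter, Set.mem_ofPred_eq] at hy
    have hyi : ‖f i y‖ = c := by
      refine le_antisymm ((hmax _ _).trans (max_le (hy i).le le_rfl)) (not_lt.mp fun hlt => ?_)
      exact ((hmax (f i x) (f i y)).trans_lt (max_lt (by rw [norm_sub_rev]; exact hy i) hlt)).false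
    refine fun j => hyi ▸ ⟨(hmax _ _).trans (max_le (hy j).le (hx j).1),
      fun hj => (hmax _ _).trans_lt (max_lt (hy j) ((hx j).2 hj))⟩
  · exact isOpen_iInter_of_finite fun j =>
      isOpen_lt ((hcont j).sub continuous_const).norm continuous_const

end FirstMaxNorm

namespace Parabolic

section BlockMatrix

variable {F : Type*} [Field F] {n r : ℕ} (hrn : r ≤ n)

theorem mem_iff {g : GL (Fin n) F} :
    g ∈ Parabolic F n r ↔ IsParMat r (g : Matrix (Fin n) (Fin n) F) :=
  Iff.rfl

def leftCols (M : Matrix (Fin n) (Fin n) F) : Matrix (Fin n) (Fin r) F :=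
  M.submatrix id (Fin.castLE hrn)

def topLeft (M : Matrix (Fin n) (Fin n) F) : Matrix (Fin r) (Fin r) F :=
  M.submatrix (Fin.castLE hrn) (Fin.castLE hrn)

theorem submatrix_castLE_mul_of_isParMat {α : Type*} (f : α → Fin n)
    (M : Matrix (Fin n) (Fin n) F) {p : Matrix (Fin n) (Fin n) F} (hp : IsParMat r p) :
    (M * p).submatrix f (Fin.castLE hrn) = M.submatrix f (Fin.castLE hrn) * topLeft hrn p := by
  ext i j
  simp only [submatrix_apply, mul_apply, topLeft]
  refine (Fintype.sum_of_injective _ (Fin.castLE_injective hrn) _ _ (fun k hk => ?_)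
    fun _ => rfl).symm
  have hkr : r ≤ (k : ℕ) := not_lt.mp fun h => hk ⟨⟨k, h⟩, rfl⟩
  rw [hp k _ hkr j.isLt, mul_zero]

theorem topLeft_mul_of_isParMat (M : Matrix (Fin n) (Fin n) F) {p : Matrix (Fin n) (Fin n) F}
    (hp : IsParMat r p) : topLeft hrn (M * p) = topLeft hrn M * topLeft hrn p :=
  submatrix_castLE_mul_of_isParMat hrn _ M hp

theorem leftCols_mul_of_isParMat (M : Matrix (Fin n) (Fin n) F) {p : Matrix (Fin n) (Fin n) F}
    (hp : IsParMat r p) : leftCols hrn (M * p) = leftCols hrn M * topLeft hrn p :=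
  submatrix_castLE_mul_of_isParMat hrn _ M hp

theorem isUnit_det_topLeft {p : GL (Fin n) F} (hp : p ∈ Parabolic F n r) :
    IsUnit (topLeft hrn (p : Matrix (Fin n) (Fin n) F)).det := by
  refine isUnit_det_of_right_inverse (B := topLeft hrn ((p⁻¹ : GL (Fin n) F) : Matrix _ _ F)) ?_
  rw [← topLeft_mul_of_isParMat hrn _ (inv_mem hp), ← Units.val_mul, mul_inv_cancel,
    Units.val_one, topLeft, submatrix_one _ (Fin.castLE_injective hrn)]

def lowerRows (Y : Matrix (Fin n) (Fin r) F) : Matrix (Fin n) (Fin r) F :=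
  of fun i j => if r ≤ (i : ℕ) then Y i j else 0

/-- The `n × n` matrix carrying the rows `≥ r` of `Y` in its lower-left `(n - r) × r` block. -/
def lowerLeftBlock (Y : Matrix (Fin n) (Fin r) F) : Matrix (Fin n) (Fin n) F :=
  lowerRows Y * (1 : Matrix (Fin n) (Fin n) F).submatrix (Fin.castLE hrn) id

theorem lowerLeftBlock_mul (Y : Matrix (Fin n) (Fin r) F) (M : Matrix (Fin n) (Fin n) F) :
    lowerLeftBlock hrn Y * M = lowerRows Y * M.submatrix (Fin.castLE hrn) id := by
  rw [lowerLeftBlock, Matrix.mul_assoc, ← submatrix_id_id M,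
    ← submatrix_mul _ _ _ _ _ bijective_id, Matrix.one_mul, submatrix_id_id]

theorem lowerLeftBlock_mul_self (Y : Matrix (Fin n) (Fin r) F) :
    lowerLeftBlock hrn Y * lowerLeftBlock hrn Y = 0 := by
  have htop : (lowerRows Y).submatrix (Fin.castLE hrn) id = 0 := by
    ext i j
    simp [lowerRows, i.isLt]
  rw [lowerLeftBlock_mul, lowerLeftBlock, ← submatrix_id_id (1 : Matrix (Fin n) (Fin n) F),
    submatrix_mul _ _ _ _ _ bijective_id, htop, Matrix.zero_mul, Matrix.mul_zero]

def lowerUnipotent (Y : Matrix (Fin n) (Fin r) F) : GL (Fin n) F where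
  val := 1 + lowerLeftBlock hrn Y
  inv := 1 - lowerLeftBlock hrn Y
  val_inv := by simp [add_mul, mul_sub, lowerLeftBlock_mul_self]
  inv_val := by simp [sub_mul, mul_add, lowerLeftBlock_mul_self]

theorem isParMat_lowerUnipotent_inv_mul {Y : Matrix (Fin n) (Fin r) F}
    {M : Matrix (Fin n) (Fin n) F} (hY : Y * topLeft hrn M = leftCols hrn M) :
    IsParMat r ((((lowerUnipotent hrn Y)⁻¹ : GL (Fin n) F) : Matrix (Fin n) (Fin n) F) * M) := by
  intro i j hi hj
  have hYij := congrFun (congrFun hY i) ⟨j, hj⟩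
  change ((1 - lowerLeftBlock hrn Y) * M) i j = 0
  rw [sub_mul, Matrix.one_mul, Matrix.sub_apply, lowerLeftBlock_mul, sub_eq_zero, eq_comm]
  simpa [lowerRows, mul_apply, hi, leftCols, topLeft] using hYij

end BlockMatrix

section BigCell

variable {F : Type*} [Field F] {n r : ℕ} (hrn : r ≤ n)

def bigCell : Set (GL (Fin n) F) :=
  {g | IsUnit (topLeft hrn (g : Matrix (Fin n) (Fin n) F)).det}

noncomputable def bigCellSection (g : GL (Fin n) F) : GL (Fin n) F :=
  lowerUnipotent hrn (leftCols hrn (g : Matrix (Fin n) (Fin n) F) *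
    (topLeft hrn (g : Matrix (Fin n) (Fin n) F))⁻¹)

variable [TopologicalSpace F] [IsTopologicalDivisionRing F]

theorem continuous_lowerUnipotent :
    Continuous (lowerUnipotent hrn : Matrix (Fin n) (Fin r) F → _) := by
  have hlower : Continuous (lowerLeftBlock hrn : Matrix (Fin n) (Fin r) F → _) :=
    (continuous_matrix fun i j => (continuous_apply_apply i j).if_const _ continuous_const
      ).matrix_mul continuous_const
  exact Units.continuous_iff.mpr ⟨continuous_const.add hlower, continuous_const.sub hlower⟩

theorem isLocalSection_bigCellSection :
    IsLocalSection (Parabolic F n r) (bigCell hrn) (bigCellSection hrn) where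
  mul_mem g hg p hp := by
    simpa only [bigCell, Set.mem_ofPred_eq, Units.val_mul, topLeft_mul_of_isParMat hrn _ hp,
      det_mul] using hg.mul (isUnit_det_topLeft hrn hp)
  inv_mul_mem g hg := by
    rw [mem_iff, Units.val_mul]
    exact isParMat_lowerUnipotent_inv_mul hrn (nonsing_inv_mul_cancel_right _ _ hg)
  apply_mul g _ p hp := by
    simp only [bigCellSection, Units.val_mul, leftCols_mul_of_isParMat hrn _ hp,
      topLeft_mul_of_isParMat hrn _ hp, Matrix.mul_inv_rev, Matrix.mul_assoc,
      mul_nonsing_inv_cancel_left _ _ (isUnit_det_topLeft hrn hp)]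
  continuousOn := by
    rw [continuousOn_iff_continuous_domRestrict]
    have hval : Continuous fun g : bigCell (F := F) hrn =>
        ((g : GL (Fin n) F) : Matrix (Fin n) (Fin n) F) :=
      Units.continuous_val.comp continuous_subtype_val
    have hinv : Continuous fun g : bigCell (F := F) hrn =>
        (topLeft hrn ((g : GL (Fin n) F) : Matrix (Fin n) (Fin n) F))⁻¹ :=
      continuous_iff_continuousAt.mpr fun g =>
        (continuousAt_matrix_inv _ (by
          rw [Ring.inverse_eq_inv']; exact continuousAt_inv₀ g.2.ne_zero)).comp
          (hval.matrix_submatrix _ _).continuousAt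
    exact (continuous_lowerUnipotent hrn).comp ((hval.matrix_submatrix _ _).matrix_mul hinv)

end BigCell

section PermutedMinors

variable {F : Type*} [Field F] {n r : ℕ} (hrn : r ≤ n)

def rowPerm (π : Equiv.Perm (Fin n)) : GL (Fin n) F :=
  (permMatrixHom (R := F)).toHomUnits π⁻¹

theorem rowPerm_mul (π : Equiv.Perm (Fin n)) (g : GL (Fin n) F) :
    ((rowPerm π * g : GL (Fin n) F) : Matrix (Fin n) (Fin n) F) =
      (g : Matrix (Fin n) (Fin n) F).submatrix π id := by
  rw [rowPerm, Units.val_mul, MonoidHom.coe_toHomUnits, permMatrixHom_apply, inv_inv]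
  exact PEquiv.toMatrix_toPEquiv_mul _ _

def permMinor (π : Equiv.Perm (Fin n)) (g : GL (Fin n) F) : F :=
  (topLeft hrn ((rowPerm π * g : GL (Fin n) F) : Matrix (Fin n) (Fin n) F)).det

theorem permMinor_mul (π : Equiv.Perm (Fin n)) (g : GL (Fin n) F) {p : GL (Fin n) F}
    (hp : p ∈ Parabolic F n r) :
    permMinor hrn π (g * p) =
      permMinor hrn π g * (topLeft hrn (p : Matrix (Fin n) (Fin n) F)).det := by
  rw [permMinor, permMinor, ← mul_assoc, Units.val_mul _ p, topLeft_mul_of_isParMat hrn _ hp,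
    det_mul]

theorem exists_permMinor_ne_zero (g : GL (Fin n) F) : ∃ π, permMinor hrn π g ≠ 0 := by
  have hleft : ((g⁻¹ : GL (Fin n) F) : Matrix (Fin n) (Fin n) F).submatrix (Fin.castLE hrn) id *
      leftCols hrn (g : Matrix (Fin n) (Fin n) F) = 1 := by
    rw [leftCols, ← submatrix_mul _ _ _ _ _ bijective_id, ← Units.val_mul, inv_mul_cancel,
      Units.val_one, submatrix_one _ (Fin.castLE_injective hrn)]
  obtain ⟨s, hs, hunit⟩ := exists_injective_isUnit_submatrix_of_mul_eq_one hleft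
  obtain ⟨π, hπ⟩ := Fin.exists_perm_castLE_eq hrn hs
  refine ⟨π, ?_⟩
  rw [permMinor, rowPerm_mul, topLeft, submatrix_submatrix,
    show π ∘ Fin.castLE hrn = s from funext hπ]
  exact ((isUnit_iff_isUnit_det _).mp hunit).ne_zero

theorem continuous_permMinor [TopologicalSpace F] [IsTopologicalRing F]
    (π : Equiv.Perm (Fin n)) : Continuous (permMinor (F := F) hrn π) :=
  ((Units.continuous_val.comp (continuous_const_mul _)).matrix_submatrix _ _).matrix_det

end PermutedMinors

section Cells

variable {F : Type*} [NormedField F] {n r : ℕ} (hrn : r ≤ n)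

/-- `permMinor` reindexed by `Fin`, whose order breaks ties in `firstMaxNormSet`. -/
noncomputable def cellMinor (k : Fin (Fintype.card (Equiv.Perm (Fin n)))) (g : GL (Fin n) F) : F :=
  permMinor hrn ((Fintype.equivFin _).symm k) g

theorem exists_cellMinor_ne_zero (g : GL (Fin n) F) : ∃ k, cellMinor hrn k g ≠ 0 := by
  obtain ⟨π, hπ⟩ := exists_permMinor_ne_zero hrn g
  exact ⟨Fintype.equivFin _ π, by simpa [cellMinor] using hπ⟩

theorem isLocalSection_firstMaxNormSet_cellMinor (k : Fin (Fintype.card (Equiv.Perm (Fin n)))) :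
    IsLocalSection (Parabolic F n r) (firstMaxNormSet (cellMinor hrn) k) fun g =>
      (rowPerm ((Fintype.equivFin _).symm k))⁻¹ *
        bigCellSection hrn (rowPerm ((Fintype.equivFin _).symm k) * g) := by
  refine ((isLocalSection_bigCellSection hrn).leftTranslate _).mono
    (fun g hg => (ne_zero_of_mem_firstMaxNormSet (exists_cellMinor_ne_zero hrn) hg).isUnit)
    fun g hg p hp => firstMaxNormSet_of_norm_eq_mul
      (norm_pos_iff.mpr (isUnit_det_topLeft hrn hp).ne_zero) (fun j => ?_) hg
  rw [cellMinor, cellMinor, permMinor_mul hrn _ _ hp, norm_mul, mul_comm]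

end Cells

end Parabolic

theorem exists_closed_local_sections_for_parabolic_general
    {F : Type*} [NontriviallyNormedField F] [IsUltrametricDist F]
    {n r : ℕ} (hrn : r < n) :
    ∃ (m : ℕ) (U : Fin m → Set (GL (Fin n) F)),
      (∀ i, IsClosed (U i)) ∧
      (∀ i, Topology.IsEmbedding
        (fun q : U i × (Parabolic F n r) => (q.1 : GL (Fin n) F) * (q.2 : GL (Fin n) F))) ∧
      (∀ i, IsOpen (U i * (Parabolic F n r : Set (GL (Fin n) F)))) ∧
      (Pairwise fun i j => Disjoint
        (U i * (Parabolic F n r : Set (GL (Fin n) F)))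
        (U j * (Parabolic F n r : Set (GL (Fin n) F)))) ∧
      (⋃ i, U i * (Parabolic F n r : Set (GL (Fin n) F))) = Set.univ := by
  have : Nonempty (Fin (Fintype.card (Equiv.Perm (Fin n)))) := ⟨Fintype.equivFin _ 1⟩
  exact ⟨_, exists_closed_transversals (Parabolic.isLocalSection_firstMaxNormSet_cellMinor hrn.le)
    (isOpen_firstMaxNormSet (fun k => Parabolic.continuous_permMinor hrn.le _)
      (Parabolic.exists_cellMinor_ne_zero hrn.le))
    pairwise_disjoint_firstMaxNormSet iUnion_firstMaxNormSet⟩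

/-- There are finitely many closed subsets `U₁, …, U_m` of `GL_n(F)` such
that each multiplication map `U_i × P → GL_n(F)` is injective and a homeomorphism onto its
image (an embedding), the images `U_i · P` are open and pairwise disjoint, and they cover
`GL_n(F)`. -/
theorem exists_closed_local_sections_for_parabolic
    {F : Type*} [NontriviallyNormedField F] [IsUltrametricDist F]
    [CompleteSpace F] [LocallyCompactSpace F]
    {n r : ℕ} (hn : 2 ≤ n) (hr : 0 < r) (hrn : r < n) :
    ∃ (m : ℕ) (U : Fin m → Set (GL (Fin n) F)),
      (∀ i, IsClosed (U i)) ∧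
      (∀ i, Topology.IsEmbedding
        (fun q : U i × (Parabolic F n r) => (q.1 : GL (Fin n) F) * (q.2 : GL (Fin n) F))) ∧
      (∀ i, IsOpen (U i * (Parabolic F n r : Set (GL (Fin n) F)))) ∧
      (Pairwise fun i j => Disjoint
        (U i * (Parabolic F n r : Set (GL (Fin n) F)))
        (U j * (Parabolic F n r : Set (GL (Fin n) F)))) ∧
      (⋃ i, U i * (Parabolic F n r : Set (GL (Fin n) F))) = Set.univ :=
  exists_closed_local_sections_for_parabolic_general hrn
end

section
/- The map sending a pair (λ₁, λ₂) of continuous group homomorphisms F^× → N to the map P → N, p ↦ λ₁(det A_p) + λ₂(det D_p), is a bijection from the set of pairs of continuous homomorphisms F^× → N onto the set of continuous group homomorphisms P → N. In particular, every continuous group homomorphism λ : P → N is of the form p ↦ λ₁(det A_p) + λ₂(det D_p) for unique continuous homomorphisms λ₁, λ₂ : F^× → N. -/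
open Matrix

/-- Identification of `Fin n` with `Fin r ⊕ Fin (n-r)`. -/
def blockEquiv (n r : ℕ) (h : r ≤ n) : Fin r ⊕ Fin (n - r) ≃ Fin n :=
  finSumFinEquiv.trans (finCongr (Nat.add_sub_cancel' h))

/-- The upper-left `r × r` block `A_g` of a matrix `g ∈ GL_n(F)`. -/
def Ablock {F : Type*} [Field F] {n : ℕ} (r : ℕ) (h : r ≤ n) (g : GL (Fin n) F) :
    Matrix (Fin r) (Fin r) F :=
  Matrix.toBlocks₁₁
    ((g : Matrix (Fin n) (Fin n) F).submatrix (blockEquiv n r h) (blockEquiv n r h))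

/-- The lower-right `(n-r) × (n-r)` block `D_g` of a matrix `g ∈ GL_n(F)`. -/
def Dblock {F : Type*} [Field F] {n : ℕ} (r : ℕ) (h : r ≤ n) (g : GL (Fin n) F) :
    Matrix (Fin (n - r)) (Fin (n - r)) F :=
  Matrix.toBlocks₂₂
    ((g : Matrix (Fin n) (Fin n) F).submatrix (blockEquiv n r h) (blockEquiv n r h))

lemma isUnit_det_blocks {F : Type*} [Field F] {n r : ℕ} (h : r ≤ n) {g : GL (Fin n) F}
    (hg : g ∈ Parabolic F n r) :
    IsUnit (Ablock r h g).det ∧ IsUnit (Dblock r h g).det := by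
  set M := (g : Matrix (Fin n) (Fin n) F).submatrix (blockEquiv n r h) (blockEquiv n r h)
    with hM
  have h21 : M.toBlocks₂₁ = 0 := by
    ext i j
    show (g : Matrix (Fin n) (Fin n) F)
      (blockEquiv n r h (Sum.inr i)) (blockEquiv n r h (Sum.inl j)) = 0
    apply hg
    · show r ≤ ((blockEquiv n r h) (Sum.inr i) : ℕ)
      simp [blockEquiv]
    · show ((blockEquiv n r h) (Sum.inl j) : ℕ) < r
      simp [blockEquiv]
  have hdet : (g : Matrix (Fin n) (Fin n) F).det = (Ablock r h g).det * (Dblock r h g).det := by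
    have h1 : M.det = (g : Matrix (Fin n) (Fin n) F).det :=
      Matrix.det_submatrix_equiv_self _ _
    have h2 : M = Matrix.fromBlocks M.toBlocks₁₁ M.toBlocks₁₂ 0 M.toBlocks₂₂ := by
      rw [← h21]
      exact (Matrix.fromBlocks_toBlocks M).symm
    rw [← h1]
    conv_lhs => rw [h2]
    rw [Matrix.det_fromBlocks_zero₂₁]
    rfl
  have hu : IsUnit ((g : Matrix (Fin n) (Fin n) F).det) :=
    (Matrix.isUnit_iff_isUnit_det _).mp ⟨g, rfl⟩
  rw [hdet] at hu
  constructor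
  · exact isUnit_of_mul_isUnit_left hu
  · rw [mul_comm] at hu
    exact isUnit_of_mul_isUnit_left hu

/-- The determinant of the upper-left block of an element of `P`, as a unit of `F`. -/
noncomputable def AblockDetUnit {F : Type*} [Field F] {n r : ℕ} (h : r ≤ n)
    (g : GL (Fin n) F) (hg : g ∈ Parabolic F n r) : Fˣ :=
  ((isUnit_det_blocks h hg).1).unit

/-- The determinant of the lower-right block of an element of `P`, as a unit of `F`. -/
noncomputable def DblockDetUnit {F : Type*} [Field F] {n r : ℕ} (h : r ≤ n)
    (g : GL (Fin n) F) (hg : g ∈ Parabolic F n r) : Fˣ :=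
  ((isUnit_det_blocks h hg).2).unit

/-!
The block determinants `p ↦ det A_p` and `p ↦ det D_p` are continuous homomorphisms `P → Fˣ`, so
every pair `(λ₁, λ₂)` gives a continuous homomorphism. Conversely, let `λ` be a homomorphism from
`P` to an abelian group and write `p = ι(A_p) ι(D_p) u(X)` with `u(X)` in the unipotent radical.
Conjugation by the scalar `a` of the `GL_r`-block turns `u(X)` into `u(a X)`, and `F` has units
`a ≠ 1`, so `λ` kills `u(X)`. The same argument kills the transvections of `GL_m(F)`; since these
and the diagonal matrices generate `GL_m(F)`, and permutation matrices move a diagonal entry to any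
position, `λ ∘ ι` factors through `det`. Hence `λ(p) = λ₁(det A_p) + λ₂(det D_p)` with
`λ₁ a = λ(ι(diag(a, 1, …, 1)))` and similarly for `λ₂`; evaluating on these diagonal elements
gives uniqueness.
-/

theorem map_eq_one_of_conj_eq_smul {G Γ K V : Type*} [Group G] [CommGroup Γ] [Field K]
    [AddCommGroup V] [Module K V] (μ : G →* Γ) {u : V → G}
    (hu : ∀ v w, u (v + w) = u v * u w) {g : G} {a : K} (ha : a ≠ 1)
    (hg : ∀ v, g * u v * g⁻¹ = u (a • v)) (v : V) : μ (u v) = 1 := by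
  set w := (a - 1)⁻¹ • v
  have hw : a • w = v + w := by
    have hv : (a - 1) • w = v := by simp [w, smul_smul, sub_ne_zero.2 ha]
    rw [← hv, sub_smul, one_smul, sub_add_cancel]
  -- `u (a • w) = u v * u w` is a conjugate of `u w`
  have hconj := congrArg μ (hg w)
  rw [hw, hu] at hconj
  simpa using hconj.symm

lemma continuous_of_continuous_val {G M : Type*} [Group G] [TopologicalSpace G] [ContinuousInv G]
    [Monoid M] [TopologicalSpace M] (φ : G →* Mˣ) (hφ : Continuous fun g => (φ g : M)) :
    Continuous φ :=
  Units.continuous_iff.2 ⟨hφ, by simp_rw [← map_inv]; exact hφ.comp continuous_inv⟩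

namespace Matrix.GeneralLinearGroup

section CommRing

variable {ι R : Type*} [Fintype ι] [DecidableEq ι] [CommRing R]

def diagonalUnits : (ι → Rˣ) →* GL ι R :=
  (Units.map (diagonalRingHom ι R : (ι → R) →* Matrix ι ι R)).comp
    MulEquiv.piUnits.symm.toMonoidHom

def diagSingle (k : ι) : Rˣ →* GL ι R :=
  diagonalUnits.comp (MonoidHom.mulSingle (fun _ => Rˣ) k)

@[simp] lemma coe_diagSingle (k : ι) (a : Rˣ) :
    (diagSingle k a : Matrix ι ι R) = diagonal fun l => ((Pi.mulSingle k a : ι → Rˣ) l : R) :=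
  rfl

@[simp] lemma det_diagSingle (k : ι) (a : Rˣ) : det (diagSingle k a : GL ι R) = a := by
  ext
  rw [val_det_apply, coe_diagSingle, det_diagonal, ← Units.coe_prod, Finset.prod_pi_mulSingle']
  simp

lemma diagSingle_mul_transvection_mul_inv {i j : ι} (hij : i ≠ j) (a : Rˣ) (c : R) :
    diagSingle i a * SpecialLinearGroup.toGL (SpecialLinearGroup.transvection hij c) *
      (diagSingle i a)⁻¹ =
      SpecialLinearGroup.toGL (SpecialLinearGroup.transvection hij (a * c)) := by
  rw [← map_inv]
  ext k l
  simp only [Units.val_mul, coe_diagSingle, SpecialLinearGroup.coe_GL_coe_matrix,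
    SpecialLinearGroup.transvection_coe, mul_diagonal, diagonal_mul, add_apply, one_apply,
    single_apply, Pi.mulSingle_apply]
  by_cases hk : k = i <;> by_cases hl : l = i <;> simp_all [eq_comm]

variable {Γ : Type*} [CommGroup Γ]

lemma map_diagSingle_eq (μ : GL ι R →* Γ) (k k' : ι) (a : Rˣ) :
    μ (diagSingle k a) = μ (diagSingle k' a) := by
  set P : GL ι R := (permMatrixHom (R := R)).toHomUnits (Equiv.swap k k')
  have hconj : P * diagSingle k a * P⁻¹ = diagSingle k' a := by
    rw [← map_inv]
    ext l m
    simp only [P, Units.val_mul, MonoidHom.coe_toHomUnits, permMatrixHom_apply, coe_diagSingle,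
      Equiv.swap_inv, Equiv.Perm.permMatrix, PEquiv.toMatrix_toPEquiv_mul,
      PEquiv.mul_toMatrix_toPEquiv, submatrix_apply, id, Equiv.symm_swap]
    simp [diagonal_apply, Pi.mulSingle_apply, Equiv.swap_apply_eq_iff]
  rw [← hconj, map_mul, map_mul, map_inv, mul_inv_cancel_comm]

lemma map_diagonalUnits (μ : GL ι R →* Γ) (k₀ : ι) (d : ι → Rˣ) :
    μ (diagonalUnits d) = μ (diagSingle k₀ (∏ k, d k)) :=
  calc μ (diagonalUnits d) = (μ.comp diagonalUnits) (∏ k, Pi.mulSingle k (d k)) := by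
        rw [Finset.univ_prod_mulSingle]; rfl
    _ = ∏ k, μ (diagSingle k₀ (d k)) := by
        rw [map_prod]
        exact Finset.prod_congr rfl fun k _ => map_diagSingle_eq μ k k₀ (d k)
    _ = μ (diagSingle k₀ (∏ k, d k)) := (map_prod (μ.comp (diagSingle k₀)) _ _).symm

end CommRing

section Field

variable {ι F Γ : Type*} [Fintype ι] [DecidableEq ι] [Field F] [CommGroup Γ]

lemma map_transvection_eq_one (μ : GL ι F →* Γ) {a : Fˣ} (ha : (a : F) ≠ 1) {i j : ι}
    (hij : i ≠ j) (c : F) :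
    μ (SpecialLinearGroup.toGL (SpecialLinearGroup.transvection hij c)) = 1 :=
  map_eq_one_of_conj_eq_smul μ (fun _ _ => by rw [SpecialLinearGroup.transvection_add, map_mul])
    ha (diagSingle_mul_transvection_mul_inv hij a) c

theorem map_eq_map_diagSingle_det (μ : GL ι F →* Γ) {a : Fˣ} (ha : (a : F) ≠ 1) (k₀ : ι)
    (g : GL ι F) : μ g = μ (diagSingle k₀ (det g)) := by
  suffices key : ∀ (M : Matrix ι ι F) (hM : M.det ≠ 0),
      μ (mkOfDetNeZero M hM) = μ (diagSingle k₀ (Units.mk0 _ hM)) by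
    convert key g g.det_ne_zero using 3 <;> exact Units.ext rfl
  intro M hM
  refine diagonal_transvection_induction_of_det_ne_zero
    (fun M => ∀ hM : M.det ≠ 0, μ (mkOfDetNeZero M hM) = μ (diagSingle k₀ (Units.mk0 _ hM)))
    M hM ?_ ?_ ?_ hM
  · intro D _ hD
    have hDk : ∀ k, D k ≠ 0 := by simpa [det_diagonal, Finset.prod_ne_zero_iff] using hD
    have hunits : mkOfDetNeZero (diagonal D) hD =
        diagonalUnits fun k => Units.mk0 (D k) (hDk k) := Units.ext rfl
    rw [hunits, map_diagonalUnits μ k₀]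
    congr 2
    ext
    simp [det_diagonal]
  · intro t ht
    have ht_eq : mkOfDetNeZero t.toMatrix ht =
        SpecialLinearGroup.toGL (SpecialLinearGroup.transvection t.hij t.c) := Units.ext rfl
    have hdet : Units.mk0 _ ht = 1 := Units.ext t.det
    rw [ht_eq, hdet, map_one, map_one, map_transvection_eq_one μ ha]
  · intro A B hA hB hPA hPB hAB
    have hmul : mkOfDetNeZero (A * B) hAB = mkOfDetNeZero A hA * mkOfDetNeZero B hB :=
      Units.ext rfl
    have hdet : Units.mk0 _ hAB = Units.mk0 _ hA * Units.mk0 _ hB := Units.ext (det_mul A B)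
    rw [hmul, hdet, map_mul, map_mul, map_mul, hPA hA, hPB hB]

end Field

lemma continuous_diagSingle {ι F : Type*} [Fintype ι] [DecidableEq ι] [Field F]
    [TopologicalSpace F] [ContinuousMul F] (k : ι) :
    Continuous (diagSingle k : Fˣ → GL ι F) :=
  continuous_of_continuous_val _ <| Continuous.matrix_diagonal <| continuous_pi fun l =>
    Units.continuous_val.comp
      ((_root_.continuous_apply l).comp (continuous_mulSingle (A := fun _ => Fˣ) k))

end Matrix.GeneralLinearGroup

namespace Parabolic

open GeneralLinearGroup

section Algebra

variable {F : Type*} [Field F] {n r : ℕ} (h : r ≤ n)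

def blockMatrix (g : GL (Fin n) F) : Matrix (Fin r ⊕ Fin (n - r)) (Fin r ⊕ Fin (n - r)) F :=
  (g : Matrix (Fin n) (Fin n) F).submatrix (blockEquiv n r h) (blockEquiv n r h)

lemma blockMatrix_injective : Function.Injective (blockMatrix (F := F) h) := fun _ _ hgg' =>
  Units.ext ((reindex (blockEquiv n r h).symm (blockEquiv n r h).symm).injective hgg')

lemma blockMatrix_one : blockMatrix h (1 : GL (Fin n) F) = 1 := submatrix_one_equiv _

lemma blockMatrix_mul (g g' : GL (Fin n) F) :
    blockMatrix h (g * g') = blockMatrix h g * blockMatrix h g' :=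
  (submatrix_mul_equiv _ _ _ _ _).symm

lemma blockMatrix_eq_fromBlocks (p : Parabolic F n r) :
    blockMatrix h p.1 =
      fromBlocks (Ablock r h p.1) (blockMatrix h p.1).toBlocks₁₂ 0 (Dblock r h p.1) := by
  have h₂₁ : (blockMatrix h p.1).toBlocks₂₁ = 0 := by
    ext i j
    refine p.2 _ _ ?_ ?_ <;> simp [blockEquiv]
  rw [← h₂₁]
  exact (fromBlocks_toBlocks _).symm

lemma Ablock_mul (p q : Parabolic F n r) :
    Ablock r h (p * q).1 = Ablock r h p.1 * Ablock r h q.1 := by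
  change (blockMatrix h (p.1 * q.1)).toBlocks₁₁ = _
  rw [blockMatrix_mul, blockMatrix_eq_fromBlocks h p, blockMatrix_eq_fromBlocks h q,
    fromBlocks_multiply]
  simp

lemma Dblock_mul (p q : Parabolic F n r) :
    Dblock r h (p * q).1 = Dblock r h p.1 * Dblock r h q.1 := by
  change (blockMatrix h (p.1 * q.1)).toBlocks₂₂ = _
  rw [blockMatrix_mul, blockMatrix_eq_fromBlocks h p, blockMatrix_eq_fromBlocks h q,
    fromBlocks_multiply]
  simp

def leviA : Parabolic F n r →* GL (Fin r) F where
  toFun p := mkOfDetNeZero (Ablock r h p.1) (isUnit_det_blocks h p.2).1.ne_zero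
  map_one' := Units.ext <| by simp [Ablock, ← fromBlocks_one]
  map_mul' p q := Units.ext (Ablock_mul h p q)

def leviD : Parabolic F n r →* GL (Fin (n - r)) F where
  toFun p := mkOfDetNeZero (Dblock r h p.1) (isUnit_det_blocks h p.2).2.ne_zero
  map_one' := Units.ext <| by simp [Dblock, ← fromBlocks_one]
  map_mul' p q := Units.ext (Dblock_mul h p q)

lemma AblockDetUnit_eq (p : Parabolic F n r) : AblockDetUnit h p.1 p.2 = det (leviA h p) :=
  Units.ext (IsUnit.unit_spec _)

lemma DblockDetUnit_eq (p : Parabolic F n r) : DblockDetUnit h p.1 p.2 = det (leviD h p) :=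
  Units.ext (IsUnit.unit_spec _)

def ofBlocks (A : GL (Fin r) F) (B : Matrix (Fin r) (Fin (n - r)) F) (D : GL (Fin (n - r)) F) :
    Parabolic F n r :=
  ⟨mkOfDetNeZero
      ((fromBlocks A.1 B 0 D.1).submatrix (blockEquiv n r h).symm (blockEquiv n r h).symm)
      (by simp [det_fromBlocks_zero₂₁, A.det_ne_zero, D.det_ne_zero]), by
    intro i j hi hj
    obtain ⟨i, rfl⟩ := (blockEquiv n r h).surjective i
    obtain ⟨j, rfl⟩ := (blockEquiv n r h).surjective j
    rcases i with i | i <;> rcases j with j | j <;> simp [blockEquiv] at hi hj ⊢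
    omega⟩

lemma blockMatrix_ofBlocks (A : GL (Fin r) F) (B) (D : GL (Fin (n - r)) F) :
    blockMatrix h (ofBlocks h A B D).1 = fromBlocks A.1 B 0 D.1 := by
  simp [blockMatrix, ofBlocks]

lemma leviA_ofBlocks (A : GL (Fin r) F) (B) (D : GL (Fin (n - r)) F) :
    leviA h (ofBlocks h A B D) = A :=
  Units.ext <| by simp [leviA, Ablock, ← blockMatrix.eq_def, blockMatrix_ofBlocks]

lemma leviD_ofBlocks (A : GL (Fin r) F) (B) (D : GL (Fin (n - r)) F) :
    leviD h (ofBlocks h A B D) = D :=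
  Units.ext <| by simp [leviD, Dblock, ← blockMatrix.eq_def, blockMatrix_ofBlocks]

lemma ofBlocks_mul (A A' : GL (Fin r) F) (B B') (D D' : GL (Fin (n - r)) F) :
    ofBlocks h A B D * ofBlocks h A' B' D' =
      ofBlocks h (A * A') (A.1 * B' + B * D'.1) (D * D') := by
  refine Subtype.ext (blockMatrix_injective h ?_)
  rw [Subgroup.coe_mul, blockMatrix_mul, blockMatrix_ofBlocks, blockMatrix_ofBlocks,
    blockMatrix_ofBlocks, fromBlocks_multiply]
  simp

lemma eq_ofBlocks (p : Parabolic F n r) :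
    p = ofBlocks h (leviA h p) (blockMatrix h p.1).toBlocks₁₂ (leviD h p) := by
  refine Subtype.ext (blockMatrix_injective h ?_)
  rw [blockMatrix_ofBlocks, blockMatrix_eq_fromBlocks h p]
  rfl

def inclA : GL (Fin r) F →* Parabolic F n r where
  toFun A := ofBlocks h A 0 1
  map_one' := Subtype.ext <| blockMatrix_injective h <| by
    simp [blockMatrix_ofBlocks, blockMatrix_one]
  map_mul' A A' := by simp [ofBlocks_mul]

def inclD : GL (Fin (n - r)) F →* Parabolic F n r where
  toFun D := ofBlocks h 1 0 D
  map_one' := Subtype.ext <| blockMatrix_injective h <| by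
    simp [blockMatrix_ofBlocks, blockMatrix_one]
  map_mul' D D' := by simp [ofBlocks_mul]

@[simp] lemma leviA_inclA (A : GL (Fin r) F) : leviA h (inclA h A) = A := leviA_ofBlocks h _ _ _

@[simp] lemma leviD_inclA (A : GL (Fin r) F) : leviD h (inclA h A) = 1 := leviD_ofBlocks h _ _ _

@[simp] lemma leviA_inclD (D : GL (Fin (n - r)) F) : leviA h (inclD h D) = 1 :=
  leviA_ofBlocks h _ _ _

@[simp] lemma leviD_inclD (D : GL (Fin (n - r)) F) : leviD h (inclD h D) = D :=
  leviD_ofBlocks h _ _ _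

def unipotent (X : Matrix (Fin r) (Fin (n - r)) F) : Parabolic F n r := ofBlocks h 1 X 1

lemma unipotent_add (X Y : Matrix (Fin r) (Fin (n - r)) F) :
    unipotent h (X + Y) = unipotent h X * unipotent h Y := by
  simp [unipotent, ofBlocks_mul, add_comm]

lemma inclA_scalar_mul_unipotent_mul_inv (a : Fˣ) (X : Matrix (Fin r) (Fin (n - r)) F) :
    inclA h (scalar _ a) * unipotent h X * (inclA h (scalar _ a))⁻¹ =
      unipotent h ((a : F) • X) := by
  rw [← map_inv]
  simp [inclA, unipotent, ofBlocks_mul, ← smul_eq_diagonal_mul]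

lemma ofBlocks_eq_inclA_mul_inclD_mul_unipotent (A : GL (Fin r) F) (B) (D : GL (Fin (n - r)) F) :
    ofBlocks h A B D = inclA h A * inclD h D * unipotent h ((A⁻¹ : GL (Fin r) F).1 * B) := by
  simp [inclA, inclD, unipotent, ofBlocks_mul, ← Matrix.mul_assoc]

variable {Γ : Type*} [CommGroup Γ]

lemma map_unipotent_eq_one (Λ : Parabolic F n r →* Γ) {a : Fˣ} (ha : (a : F) ≠ 1)
    (X : Matrix (Fin r) (Fin (n - r)) F) : Λ (unipotent h X) = 1 :=
  map_eq_one_of_conj_eq_smul Λ (unipotent_add h) ha (inclA_scalar_mul_unipotent_mul_inv h a) X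

theorem map_eq_map_inclA_mul_map_inclD (Λ : Parabolic F n r →* Γ) {a : Fˣ} (ha : (a : F) ≠ 1)
    (i₀ : Fin r) (j₀ : Fin (n - r)) (p : Parabolic F n r) :
    Λ p = Λ (inclA h (diagSingle i₀ (det (leviA h p)))) *
      Λ (inclD h (diagSingle j₀ (det (leviD h p)))) := by
  conv_lhs => rw [eq_ofBlocks h p, ofBlocks_eq_inclA_mul_inclD_mul_unipotent, map_mul, map_mul,
    map_unipotent_eq_one h Λ ha, mul_one]
  exact congrArg₂ (· * ·) (map_eq_map_diagSingle_det (Λ.comp (inclA h)) ha i₀ _)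
    (map_eq_map_diagSingle_det (Λ.comp (inclD h)) ha j₀ _)

end Algebra

section Topology

variable {F : Type*} [Field F] [TopologicalSpace F] [IsTopologicalRing F] {n r : ℕ} (h : r ≤ n)

lemma continuous_det_leviA : Continuous fun p : Parabolic F n r => det (leviA h p) :=
  continuous_of_continuous_val (GeneralLinearGroup.det.comp (leviA h))
    ((Units.continuous_val.comp continuous_subtype_val).matrix_submatrix
      (blockEquiv n r h ∘ Sum.inl) (blockEquiv n r h ∘ Sum.inl)).matrix_det

lemma continuous_det_leviD : Continuous fun p : Parabolic F n r => det (leviD h p) :=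
  continuous_of_continuous_val (GeneralLinearGroup.det.comp (leviD h))
    ((Units.continuous_val.comp continuous_subtype_val).matrix_submatrix
      (blockEquiv n r h ∘ Sum.inr) (blockEquiv n r h ∘ Sum.inr)).matrix_det

lemma continuous_inclA : Continuous (inclA h : GL (Fin r) F → Parabolic F n r) :=
  continuous_induced_rng.2 <|
    continuous_of_continuous_val ((Parabolic F n r).subtype.comp (inclA h)) <| by
      simp only [inclA, ofBlocks, MonoidHom.coe_comp, Subgroup.coe_subtype, MonoidHom.coe_mk,
        OneHom.coe_mk, Function.comp_apply, val_mkOfDetNeZero, Units.val_one]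
      fun_prop

lemma continuous_inclD : Continuous (inclD h : GL (Fin (n - r)) F → Parabolic F n r) :=
  continuous_induced_rng.2 <|
    continuous_of_continuous_val ((Parabolic F n r).subtype.comp (inclD h)) <| by
      simp only [inclD, ofBlocks, MonoidHom.coe_comp, Subgroup.coe_subtype, MonoidHom.coe_mk,
        OneHom.coe_mk, Function.comp_apply, val_mkOfDetNeZero, Units.val_one]
      fun_prop

end Topology

end Parabolic

theorem continuousHom_from_parabolic_classification_general
    {F : Type*} [NontriviallyNormedField F]
    {n r : ℕ} (hr : 0 < r) (hrn : r < n)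
    {N : Type*} [AddCommGroup N] [TopologicalSpace N] [IsTopologicalAddGroup N] :
    (∀ l₁ l₂ : Fˣ → N, Continuous l₁ → (∀ a b : Fˣ, l₁ (a * b) = l₁ a + l₁ b) →
      Continuous l₂ → (∀ a b : Fˣ, l₂ (a * b) = l₂ a + l₂ b) →
      Continuous (fun p : ↥(Parabolic F n r) =>
        l₁ (AblockDetUnit hrn.le p.1 p.2) + l₂ (DblockDetUnit hrn.le p.1 p.2)) ∧
      ∀ p q : ↥(Parabolic F n r),
        l₁ (AblockDetUnit hrn.le (p * q).1 (p * q).2)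
          + l₂ (DblockDetUnit hrn.le (p * q).1 (p * q).2)
        = (l₁ (AblockDetUnit hrn.le p.1 p.2) + l₂ (DblockDetUnit hrn.le p.1 p.2))
          + (l₁ (AblockDetUnit hrn.le q.1 q.2) + l₂ (DblockDetUnit hrn.le q.1 q.2))) ∧
    (∀ lam : ↥(Parabolic F n r) → N, Continuous lam →
      (∀ p q : ↥(Parabolic F n r), lam (p * q) = lam p + lam q) →
      ∃! l : (Fˣ → N) × (Fˣ → N),
        (Continuous l.1 ∧ ∀ a b : Fˣ, l.1 (a * b) = l.1 a + l.1 b) ∧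
        (Continuous l.2 ∧ ∀ a b : Fˣ, l.2 (a * b) = l.2 a + l.2 b) ∧
        ∀ p : ↥(Parabolic F n r),
          lam p = l.1 (AblockDetUnit hrn.le p.1 p.2) + l.2 (DblockDetUnit hrn.le p.1 p.2)) := by
  simp only [Parabolic.AblockDetUnit_eq, Parabolic.DblockDetUnit_eq]
  obtain ⟨x, hx⟩ := NormedField.exists_one_lt_norm F
  have hx₀ : x ≠ 0 := norm_pos_iff.1 (one_pos.trans hx)
  have hx₁ : (Units.mk0 x hx₀ : F) ≠ 1 := by rintro rfl; simp at hx
  refine ⟨fun l₁ l₂ hc₁ hm₁ hc₂ hm₂ => ⟨?_, fun p q => ?_⟩, fun lam hc hm => ?_⟩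
  · exact (hc₁.comp (Parabolic.continuous_det_leviA _)).add
      (hc₂.comp (Parabolic.continuous_det_leviD _))
  · simp only [map_mul, hm₁, hm₂]
    abel
  let Λ : Parabolic F n r →* Multiplicative N := MonoidHom.mk' (fun p => .ofAdd (lam p)) hm
  let i₀ : Fin r := ⟨0, hr⟩
  let j₀ : Fin (n - r) := ⟨0, Nat.sub_pos_of_lt hrn⟩
  refine ⟨(fun a => lam (Parabolic.inclA hrn.le (GeneralLinearGroup.diagSingle i₀ a)),
      fun d => lam (Parabolic.inclD hrn.le (GeneralLinearGroup.diagSingle j₀ d))),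
    ⟨⟨?_, fun a b => by simp [hm]⟩, ⟨?_, fun a b => by simp [hm]⟩,
      Parabolic.map_eq_map_inclA_mul_map_inclD hrn.le Λ hx₁ i₀ j₀⟩, ?_⟩
  · exact hc.comp
      ((Parabolic.continuous_inclA _).comp (GeneralLinearGroup.continuous_diagSingle i₀))
  · exact hc.comp
      ((Parabolic.continuous_inclD _).comp (GeneralLinearGroup.continuous_diagSingle j₀))
  rintro ⟨m₁, m₂⟩ ⟨⟨-, hm₁⟩, ⟨-, hm₂⟩, hlam⟩
  have hm₁_one : m₁ 1 = 0 := by simpa using hm₁ 1 1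
  have hm₂_one : m₂ 1 = 0 := by simpa using hm₂ 1 1
  refine Prod.ext (funext fun a => ?_) (funext fun d => ?_)
  · simp [hlam, hm₂_one]
  · simp [hlam, hm₁_one]

/-- Sending a pair `(λ₁, λ₂)` of continuous homomorphisms `F^× → N` to
`p ↦ λ₁(det A_p) + λ₂(det D_p)` is a bijection onto the set of continuous homomorphisms
`P → N`: the recipe always produces a continuous homomorphism on `P`, and every continuous
homomorphism `P → N` arises this way from a unique pair. -/
theorem continuousHom_from_parabolic_classification
    {F : Type*} [NontriviallyNormedField F] [IsUltrametricDist F]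
    [CompleteSpace F] [LocallyCompactSpace F]
    {n r : ℕ} (hn : 2 ≤ n) (hr : 0 < r) (hrn : r < n)
    {N : Type*} [AddCommGroup N] [TopologicalSpace N] [IsTopologicalAddGroup N] :
    (∀ l₁ l₂ : Fˣ → N, Continuous l₁ → (∀ a b : Fˣ, l₁ (a * b) = l₁ a + l₁ b) →
      Continuous l₂ → (∀ a b : Fˣ, l₂ (a * b) = l₂ a + l₂ b) →
      Continuous (fun p : ↥(Parabolic F n r) =>
        l₁ (AblockDetUnit hrn.le p.1 p.2) + l₂ (DblockDetUnit hrn.le p.1 p.2)) ∧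
      ∀ p q : ↥(Parabolic F n r),
        l₁ (AblockDetUnit hrn.le (p * q).1 (p * q).2)
          + l₂ (DblockDetUnit hrn.le (p * q).1 (p * q).2)
        = (l₁ (AblockDetUnit hrn.le p.1 p.2) + l₂ (DblockDetUnit hrn.le p.1 p.2))
          + (l₁ (AblockDetUnit hrn.le q.1 q.2) + l₂ (DblockDetUnit hrn.le q.1 q.2))) ∧
    (∀ lam : ↥(Parabolic F n r) → N, Continuous lam →
      (∀ p q : ↥(Parabolic F n r), lam (p * q) = lam p + lam q) →
      ∃! l : (Fˣ → N) × (Fˣ → N),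
        (Continuous l.1 ∧ ∀ a b : Fˣ, l.1 (a * b) = l.1 a + l.1 b) ∧
        (Continuous l.2 ∧ ∀ a b : Fˣ, l.2 (a * b) = l.2 a + l.2 b) ∧
        ∀ p : ↥(Parabolic F n r),
          lam p = l.1 (AblockDetUnit hrn.le p.1 p.2) + l.2 (DblockDetUnit hrn.le p.1 p.2)) :=
  continuousHom_from_parabolic_classification_general hr hrn
end

section
/- For continuous group homomorphisms λ, μ : F^× → N, the assignment sending a pair ((Φ₁,k), (Φ₂,k)) to (Φ₁+Φ₂, k) induces a well-defined GL_n(F)-equivariant group isomorphism from the Baer sum of E(λ) and E(μ) — namely the subgroup of E(λ) × E(μ) consisting of pairs whose two components have the same degree k, modulo the antidiagonally embedded copy {(class of (Φ,0), class of (−Φ,0))} of v_r(N) — onto E(λ+μ), and this isomorphism commutes with the degree maps to ℤ and with the inclusions of v_r(N). -/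
open Matrix

set_option linter.unusedSectionVars false
section EDefs

variable (F : Type*) [NontriviallyNormedField F] [IsUltrametricDist F]
  [CompleteSpace F] [LocallyCompactSpace F] (n r : ℕ) (hrn : r ≤ n)
  (N : Type*) [AddCommGroup N] [TopologicalSpace N] [IsTopologicalAddGroup N]

/-- The group `Ẽ(λ)` of pairs `(Φ, k)` with `Φ : GL_n(F) → N` continuous satisfying
`Φ(g·p) = Φ(g) + k·λ(det A_p)` for all `g ∈ GL_n(F)` and `p ∈ P`. -/
def Etilde (lam : Fˣ → N) : AddSubgroup ((GL (Fin n) F → N) × ℤ) where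
  carrier := {q | Continuous q.1 ∧ ∀ (g p : GL (Fin n) F) (hp : p ∈ Parabolic F n r),
      q.1 (g * p) = q.1 g + q.2 • lam (AblockDetUnit hrn p hp)}
  add_mem' := by
    rintro a b ⟨hac, ha⟩ ⟨hbc, hb⟩
    refine ⟨hac.add hbc, fun g p hp => ?_⟩
    show a.1 (g * p) + b.1 (g * p) = (a.1 g + b.1 g) + (a.2 + b.2) • lam _
    rw [ha g p hp, hb g p hp, add_zsmul]
    abel
  zero_mem' := by
    refine ⟨continuous_const, fun g p hp => ?_⟩
    show (0 : N) = 0 + (0 : ℤ) • lam _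
    simp
  neg_mem' := by
    rintro a ⟨hac, ha⟩
    refine ⟨hac.neg, fun g p hp => ?_⟩
    show -a.1 (g * p) = -a.1 g + (-a.2) • lam _
    rw [ha g p hp, neg_zsmul]
    abel

/-- The subgroup of `Ẽ(λ)` of pairs `(Φ, 0)` with `Φ` constant. -/
def EtildeConsts (lam : Fˣ → N) : AddSubgroup ↥(Etilde F n r hrn N lam) where
  carrier := {q | q.1.2 = 0 ∧ ∃ c : N, ∀ g : GL (Fin n) F, q.1.1 g = c}
  add_mem' := by
    rintro a b ⟨ha0, c, hc⟩ ⟨hb0, d, hd⟩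
    refine ⟨?_, c + d, fun g => ?_⟩
    · show a.1.2 + b.1.2 = 0
      rw [ha0, hb0]; rfl
    · show a.1.1 g + b.1.1 g = c + d
      rw [hc g, hd g]
  zero_mem' := ⟨rfl, 0, fun g => rfl⟩
  neg_mem' := by
    rintro a ⟨ha0, c, hc⟩
    refine ⟨?_, -c, fun g => ?_⟩
    · show -a.1.2 = 0
      rw [ha0]; rfl
    · show -a.1.1 g = -c
      rw [hc g]

/-- The extension `E(λ)`: the quotient of `Ẽ(λ)` by the constant functions of degree `0`. -/
abbrev Esp (lam : Fˣ → N) :=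
  ↥(Etilde F n r hrn N lam) ⧸ EtildeConsts F n r hrn N lam

/-- The degree map `E(λ) → ℤ`, `(Φ, k) ↦ k`. -/
def Edeg (lam : Fˣ → N) : Esp F n r hrn N lam →+ ℤ :=
  QuotientAddGroup.lift _
    ((AddMonoidHom.snd (GL (Fin n) F → N) ℤ).comp (Etilde F n r hrn N lam).subtype)
    (by rintro q ⟨h0, -⟩; exact h0)

@[simp] lemma Edeg_mk (lam : Fˣ → N) (q : ↥(Etilde F n r hrn N lam)) :
    Edeg F n r hrn N lam (QuotientAddGroup.mk q) = q.1.2 := rfl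

/-- The group of continuous right-`P`-invariant functions `GL_n(F) → N`; modulo constants
this is the generalized Steinberg representation `v_r(N)`. -/
def SteinbergFns : AddSubgroup (GL (Fin n) F → N) where
  carrier := {Φ | Continuous Φ ∧ ∀ (g p : GL (Fin n) F), p ∈ Parabolic F n r → Φ (g * p) = Φ g}
  add_mem' := by
    rintro a b ⟨hac, ha⟩ ⟨hbc, hb⟩
    exact ⟨hac.add hbc, fun g p hp => by
      show a (g * p) + b (g * p) = a g + b g
      rw [ha g p hp, hb g p hp]⟩
  zero_mem' := ⟨continuous_const, fun _ _ _ => rfl⟩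
  neg_mem' := by
    rintro a ⟨hac, ha⟩
    exact ⟨hac.neg, fun g p hp => by
      show -a (g * p) = -a g
      rw [ha g p hp]⟩

/-- `v_r(N)`-vectors, included into `Ẽ(λ)` as the pairs `(Φ, 0)`. -/
def stIncl (lam : Fˣ → N) : ↥(SteinbergFns F n r N) →+ ↥(Etilde F n r hrn N lam) where
  toFun := fun Φ => ⟨(Φ.1, 0), Φ.2.1, fun g p hp => by
    show Φ.1 (g * p) = Φ.1 g + (0 : ℤ) • lam _
    rw [Φ.2.2 g p hp]; simp⟩
  map_zero' := rfl
  map_add' := fun a b => by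
    apply Subtype.ext
    apply Prod.ext rfl
    show (0 : ℤ) = 0 + 0
    simp

/-- The inclusion of `v_r(N)` into `E(λ)` as the classes of pairs `(Φ, 0)`. -/
def stHom (lam : Fˣ → N) : ↥(SteinbergFns F n r N) →+ Esp F n r hrn N lam :=
  (QuotientAddGroup.mk' (EtildeConsts F n r hrn N lam)).comp (stIncl F n r hrn N lam)

@[simp] lemma Edeg_stHom (lam : Fˣ → N) (v : ↥(SteinbergFns F n r N)) :
    Edeg F n r hrn N lam (stHom F n r hrn N lam v) = 0 := rfl

/-- Left translation on `Ẽ(λ)` by an element of `GL_n(F)`. -/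
def EtransAux (lam : Fˣ → N) (h : GL (Fin n) F) :
    ↥(Etilde F n r hrn N lam) →+ ↥(Etilde F n r hrn N lam) where
  toFun := fun q => ⟨(fun g => q.1.1 (h⁻¹ * g), q.1.2),
    q.2.1.comp ((continuous_mul_left h⁻¹)),
    fun g p hp => by
      show q.1.1 (h⁻¹ * (g * p)) = q.1.1 (h⁻¹ * g) + q.1.2 • lam _
      rw [← mul_assoc]
      exact q.2.2 (h⁻¹ * g) p hp⟩
  map_zero' := rfl
  map_add' := fun a b => rfl

/-- The `GL_n(F)`-action on `E(λ)` by left translation, `(h • Φ)(g) = Φ(h⁻¹ g)`. -/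
def Etrans (lam : Fˣ → N) (h : GL (Fin n) F) :
    Esp F n r hrn N lam →+ Esp F n r hrn N lam :=
  QuotientAddGroup.map _ _ (EtransAux F n r hrn N lam h) (by
    rintro q ⟨h0, c, hc⟩
    exact ⟨h0, c, fun g => hc _⟩)

@[simp] lemma Etrans_mk (lam : Fˣ → N) (h : GL (Fin n) F) (q : ↥(Etilde F n r hrn N lam)) :
    Etrans F n r hrn N lam h (QuotientAddGroup.mk q)
      = QuotientAddGroup.mk (EtransAux F n r hrn N lam h q) := rfl

lemma mem_Etilde_add (lam mu : Fˣ → N) {P1 P2 : GL (Fin n) F → N} {k : ℤ}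
    (h1 : (P1, k) ∈ Etilde F n r hrn N lam) (h2 : (P2, k) ∈ Etilde F n r hrn N mu) :
    (P1 + P2, k) ∈ Etilde F n r hrn N (lam + mu) := by
  refine ⟨h1.1.add h2.1, fun g p hp => ?_⟩
  show P1 (g * p) + P2 (g * p)
    = (P1 g + P2 g) + k • (lam (AblockDetUnit hrn p hp) + mu (AblockDetUnit hrn p hp))
  have e1 : P1 (g * p) = P1 g + k • lam (AblockDetUnit hrn p hp) := h1.2 g p hp
  have e2 : P2 (g * p) = P2 g + k • mu (AblockDetUnit hrn p hp) := h2.2 g p hp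
  rw [e1, e2, smul_add]
  abel

/-- The pullback of `E(λ) × E(μ)` along the degree maps: pairs of equal degree. -/
def BaerPull (lam mu : Fˣ → N) :
    AddSubgroup (Esp F n r hrn N lam × Esp F n r hrn N mu) where
  carrier := {x | Edeg F n r hrn N lam x.1 = Edeg F n r hrn N mu x.2}
  add_mem' := by
    intro a b ha hb
    show Edeg F n r hrn N lam (a.1 + b.1) = Edeg F n r hrn N mu (a.2 + b.2)
    rw [map_add, map_add, ha, hb]
  zero_mem' := by
    show Edeg F n r hrn N lam 0 = Edeg F n r hrn N mu 0
    rw [map_zero, map_zero]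
  neg_mem' := by
    intro a ha
    show Edeg F n r hrn N lam (-a.1) = Edeg F n r hrn N mu (-a.2)
    rw [map_neg, map_neg, ha]

lemma mk_mem_BaerPull (lam mu : Fˣ → N) {P1 P2 : GL (Fin n) F → N} {k : ℤ}
    (h1 : (P1, k) ∈ Etilde F n r hrn N lam) (h2 : (P2, k) ∈ Etilde F n r hrn N mu) :
    ((QuotientAddGroup.mk ⟨(P1, k), h1⟩ : Esp F n r hrn N lam),
      (QuotientAddGroup.mk ⟨(P2, k), h2⟩ : Esp F n r hrn N mu))
      ∈ BaerPull F n r hrn N lam mu := rfl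

/-- The antidiagonally embedded copy of `v_r(N)` in the pullback. -/
def BaerAnti (lam mu : Fˣ → N) : AddSubgroup ↥(BaerPull F n r hrn N lam mu) where
  carrier := {x | ∃ v : ↥(SteinbergFns F n r N),
    x.1 = (stHom F n r hrn N lam v, - stHom F n r hrn N mu v)}
  add_mem' := by
    rintro a b ⟨v, hv⟩ ⟨w, hw⟩
    refine ⟨v + w, ?_⟩
    show a.1 + b.1 = _
    rw [hv, hw, map_add, map_add, Prod.mk_add_mk, neg_add]
  zero_mem' := ⟨0, by simp [Prod.ext_iff]⟩
  neg_mem' := by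
    rintro a ⟨v, hv⟩
    refine ⟨-v, ?_⟩
    show -a.1 = _
    rw [hv, map_neg, map_neg, neg_neg, Prod.neg_mk, neg_neg]

/-- The Baer sum of the extensions `E(λ)` and `E(μ)`: the pullback along the degree maps
modulo the antidiagonal copy of `v_r(N)`. -/
abbrev BaerSum (lam mu : Fˣ → N) :=
  ↥(BaerPull F n r hrn N lam mu) ⧸ BaerAnti F n r hrn N lam mu

/-- Translation on `Steinberg` functions. -/
def stTrans (h : GL (Fin n) F) : ↥(SteinbergFns F n r N) →+ ↥(SteinbergFns F n r N) where
  toFun := fun Q => ⟨fun g => Q.1 (h⁻¹ * g), Q.2.1.comp (continuous_mul_left h⁻¹),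
    fun g p hp => by
      show Q.1 (h⁻¹ * (g * p)) = Q.1 (h⁻¹ * g)
      rw [← mul_assoc]
      exact Q.2.2 (h⁻¹ * g) p hp⟩
  map_zero' := rfl
  map_add' := fun a b => rfl

lemma Etrans_stHom (lam : Fˣ → N) (h : GL (Fin n) F) (v : ↥(SteinbergFns F n r N)) :
    Etrans F n r hrn N lam h (stHom F n r hrn N lam v)
      = stHom F n r hrn N lam (stTrans F n r N h v) := rfl

@[simp] lemma Edeg_Etrans (lam : Fˣ → N) (h : GL (Fin n) F) (x : Esp F n r hrn N lam) :
    Edeg F n r hrn N lam (Etrans F n r hrn N lam h x) = Edeg F n r hrn N lam x := by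
  induction x using QuotientAddGroup.induction_on with
  | _ q => rfl

/-- Diagonal translation on the pullback. -/
def BaerTransAux (lam mu : Fˣ → N) (h : GL (Fin n) F) :
    ↥(BaerPull F n r hrn N lam mu) →+ ↥(BaerPull F n r hrn N lam mu) where
  toFun := fun x => ⟨(Etrans F n r hrn N lam h x.1.1, Etrans F n r hrn N mu h x.1.2), by
    show Edeg F n r hrn N lam (Etrans F n r hrn N lam h x.1.1)
      = Edeg F n r hrn N mu (Etrans F n r hrn N mu h x.1.2)
    rw [Edeg_Etrans, Edeg_Etrans]
    exact x.2⟩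
  map_zero' := by
    apply Subtype.ext
    show (Etrans F n r hrn N lam h 0, Etrans F n r hrn N mu h 0) = (0, 0)
    rw [map_zero, map_zero]
  map_add' := fun a b => by
    apply Subtype.ext
    show (Etrans F n r hrn N lam h (a.1.1 + b.1.1), Etrans F n r hrn N mu h (a.1.2 + b.1.2)) = _
    rw [map_add, map_add]
    rfl

/-- The `GL_n(F)`-action on the Baer sum by simultaneous left translation. -/
def BaerTrans (lam mu : Fˣ → N) (h : GL (Fin n) F) :
    BaerSum F n r hrn N lam mu →+ BaerSum F n r hrn N lam mu :=
  QuotientAddGroup.map _ _ (BaerTransAux F n r hrn N lam mu h) (by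
    rintro x ⟨v, hv⟩
    refine ⟨stTrans F n r N h v, ?_⟩
    show (Etrans F n r hrn N lam h x.1.1, Etrans F n r hrn N mu h x.1.2) = _
    rw [hv]
    show (Etrans F n r hrn N lam h (stHom F n r hrn N lam v),
      Etrans F n r hrn N mu h (- stHom F n r hrn N mu v)) = _
    rw [map_neg, Etrans_stHom, Etrans_stHom])

/-- The degree map on the Baer sum. -/
def BaerDeg (lam mu : Fˣ → N) : BaerSum F n r hrn N lam mu →+ ℤ :=
  QuotientAddGroup.lift _
    ((Edeg F n r hrn N lam).comp ((AddMonoidHom.fst _ _).comp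
      (BaerPull F n r hrn N lam mu).subtype))
    (by
      rintro x ⟨v, hv⟩
      show Edeg F n r hrn N lam x.1.1 = 0
      rw [hv]
      exact Edeg_stHom F n r hrn N lam v)

/-- The inclusion of `v_r(N)` into the pullback, via the first factor. -/
def BaerStAux (lam mu : Fˣ → N) :
    ↥(SteinbergFns F n r N) →+ ↥(BaerPull F n r hrn N lam mu) where
  toFun := fun v => ⟨(stHom F n r hrn N lam v, 0), by
    show Edeg F n r hrn N lam (stHom F n r hrn N lam v) = Edeg F n r hrn N mu 0
    rw [Edeg_stHom, map_zero]⟩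
  map_zero' := by
    apply Subtype.ext
    show (stHom F n r hrn N lam 0, (0 : Esp F n r hrn N mu)) = (0, 0)
    rw [map_zero]
  map_add' := fun a b => by
    apply Subtype.ext
    show (stHom F n r hrn N lam (a + b), (0 : Esp F n r hrn N mu)) = _
    rw [map_add]
    show _ = (stHom F n r hrn N lam a + stHom F n r hrn N lam b, 0 + 0)
    rw [add_zero]

/-- The inclusion of `v_r(N)` into the Baer sum. -/
def BaerSt (lam mu : Fˣ → N) : ↥(SteinbergFns F n r N) →+ BaerSum F n r hrn N lam mu :=
  (QuotientAddGroup.mk' _).comp (BaerStAux F n r hrn N lam mu)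

end EDefs

/-!
Adding representatives, `((Φ₁, k), (Φ₂, k)) ↦ (Φ₁ + Φ₂, k)`, is well defined on the
pullback of `E(λ)` and `E(μ)`, and its kernel is exactly the antidiagonal `v_r(N)`: if
`Φ₁ + Φ₂` is constant and `k = 0`, then `Φ₁` is right `P`-invariant and `Φ₂ ≡ -Φ₁` modulo
constants.

Surjectivity needs an element of degree one in `Ẽ(λ)`, and `λ ∘ φ` is one as soon as
`φ : GL_n(F) → F^×` is continuous with `φ(g p) = φ(g) det A_p`. Take for `φ(g)` an `r × r`
minor of largest absolute value among the minors of the first `r` columns of `g` (the Plücker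
coordinates of `g F^r`). Right multiplication by `p ∈ P` multiplies all of them by `det A_p`,
and since the absolute value of the ultrametric field `F` is locally constant away from `0`,
the set of maximizing minors is locally constant in `g`, so `φ` is continuous.
-/

open Filter Topology

theorem Matrix.exists_submatrix_det_ne_zero {m ι K : Type*} [Fintype m] [Fintype ι]
    [DecidableEq ι] [Field K] {B : Matrix m ι K} (hB : LinearIndependent K B.col) :
    ∃ ρ : ι → m, (B.submatrix ρ id).det ≠ 0 := by
  obtain ⟨κ, a, ha, hspan, hli⟩ := exists_linearIndependent' K B.row
  have : Fintype κ := Fintype.ofInjective a ha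
  have hcard : Fintype.card ι = Fintype.card κ := by
    rw [← finrank_span_eq_card hli, hspan, ← rank_eq_finrank_span_row,
      rank_eq_finrank_span_cols, finrank_span_eq_card hB]
  let e : ι ≃ κ := Fintype.equivOfCardEq hcard
  refine ⟨a ∘ e, ((Matrix.isUnit_iff_isUnit_det _).mp ?_).ne_zero⟩
  exact Matrix.linearIndependent_rows_iff_isUnit.mp (hli.comp e e.injective)

section MaxNormCoord

variable {ι E : Type*}

def argmaxNorm [Norm E] (f : ι → E) : Set ι := {i | ∀ j, ‖f j‖ ≤ ‖f i‖}

noncomputable def maxNormCoord [Nonempty ι] [Norm E] (f : ι → E) : E :=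
  f (Classical.epsilon (· ∈ argmaxNorm f))

lemma norm_le_norm_maxNormCoord [Finite ι] [Nonempty ι] [Norm E] (f : ι → E) (i : ι) :
    ‖f i‖ ≤ ‖maxNormCoord f‖ :=
  Classical.epsilon_spec (p := (· ∈ argmaxNorm f)) (Finite.exists_max fun i => ‖f i‖) i

lemma maxNormCoord_ne_zero [Finite ι] [Nonempty ι] [NormedAddCommGroup E] {f : ι → E}
    (hf : f ≠ 0) : maxNormCoord f ≠ 0 := by
  obtain ⟨i, hi⟩ := Function.ne_iff.mp hf
  exact norm_pos_iff.mp ((norm_pos_iff.mpr hi).trans_le (norm_le_norm_maxNormCoord f i))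

lemma maxNormCoord_mul [Nonempty ι] [NormedDivisionRing E] (f : ι → E) {c : E} (hc : c ≠ 0) :
    maxNormCoord (fun i => f i * c) = maxNormCoord f * c := by
  have hset : argmaxNorm (fun i => f i * c) = argmaxNorm f := by
    ext i
    simp only [argmaxNorm, Set.mem_ofPred_eq, norm_mul,
      mul_le_mul_iff_left₀ (norm_pos_iff.mpr hc)]
  simp only [maxNormCoord, hset]

lemma argmaxNorm_eq_of_forall_le [Norm E] {f : ι → E} {M : ℝ} (hle : ∀ j, ‖f j‖ ≤ M)
    {i₀ : ι} (hi₀ : ‖f i₀‖ = M) : argmaxNorm f = {i | ‖f i‖ = M} := by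
  ext i
  exact ⟨fun hi => le_antisymm (hle i) (hi₀ ▸ hi i₀), fun hi j => hi ▸ hle j⟩

/-- The norm of an ultrametric group is locally constant away from `0`. -/
lemma eventually_argmaxNorm_eq [Finite ι] [Nonempty ι] [NormedAddCommGroup E]
    [IsUltrametricDist E] {f₀ : ι → E} (hf₀ : f₀ ≠ 0) :
    ∀ᶠ f in 𝓝 f₀, argmaxNorm f = argmaxNorm f₀ := by
  set M := ‖maxNormCoord f₀‖
  have hM : 0 < M := norm_pos_iff.mpr (maxNormCoord_ne_zero hf₀)
  have hcoord : ∀ i, ∀ᶠ f in 𝓝 f₀, ‖f i‖ ≤ M ∧ (‖f i‖ = M ↔ ‖f₀ i‖ = M) := by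
    intro i
    have hi : Tendsto (fun f : ι → E => f i) (𝓝 f₀) (𝓝 (f₀ i)) := (continuous_apply i).tendsto f₀
    rcases (norm_le_norm_maxNormCoord f₀ i).lt_or_eq with hlt | heq
    · filter_upwards [hi.norm.eventually_lt_const hlt] with f hf
      exact ⟨hf.le, iff_of_false hf.ne hlt.ne⟩
    · have hsphere := (IsUltrametricDist.isOpen_sphere (x := (0 : E))
        (heq.trans_ne hM.ne')).mem_nhds (mem_sphere_zero_iff_norm.mpr rfl)
      filter_upwards [hi.eventually hsphere] with f hf
      rw [dist_zero_right] at hf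
      simp [hf, heq, M]
  filter_upwards [eventually_all.mpr hcoord] with f hf
  obtain ⟨i₀, hi₀⟩ : ∃ i₀, ‖f₀ i₀‖ = M := ⟨_, rfl⟩
  rw [argmaxNorm_eq_of_forall_le (fun j => (hf j).1) ((hf i₀).2.mpr hi₀),
    argmaxNorm_eq_of_forall_le (norm_le_norm_maxNormCoord f₀) hi₀]
  exact Set.ext fun i => (hf i).2

lemma continuousAt_maxNormCoord [Finite ι] [Nonempty ι] [NormedAddCommGroup E]
    [IsUltrametricDist E] {f₀ : ι → E} (hf₀ : f₀ ≠ 0) : ContinuousAt maxNormCoord f₀ := by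
  have hev : (fun f : ι → E => f (Classical.epsilon (· ∈ argmaxNorm f₀))) =ᶠ[𝓝 f₀]
      maxNormCoord := by
    filter_upwards [eventually_argmaxNorm_eq hf₀] with f hf
    simp only [maxNormCoord, hf]
  exact ((continuous_apply _).continuousAt).congr hev

end MaxNormCoord

section ParabolicCocycle

variable {F : Type*} {n r : ℕ}

def colMinors [Field F] (hrn : r ≤ n) (g : GL (Fin n) F) : (Fin r → Fin n) → F :=
  fun ρ => ((g : Matrix (Fin n) (Fin n) F).submatrix ρ (Fin.castLE hrn)).det

lemma colMinors_ne_zero [Field F] (hrn : r ≤ n) (g : GL (Fin n) F) : colMinors hrn g ≠ 0 := by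
  have hcols : LinearIndependent F ((g : Matrix (Fin n) (Fin n) F).submatrix id
      (Fin.castLE hrn)).col :=
    (Matrix.linearIndependent_cols_of_isUnit (Units.isUnit g)).comp _ (Fin.castLE_injective hrn)
  obtain ⟨ρ, hρ⟩ := Matrix.exists_submatrix_det_ne_zero hcols
  exact Function.ne_iff.mpr ⟨ρ, hρ⟩

lemma continuous_colMinors [NormedField F] (hrn : r ≤ n) :
    Continuous (colMinors (F := F) hrn) :=
  continuous_pi fun ρ => (Units.continuous_val.matrix_submatrix ρ (Fin.castLE hrn)).matrix_det

/-- Right multiplication by `p ∈ P` only mixes the first `r` columns among themselves. -/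
lemma colMinors_mul [Field F] (hrn : r ≤ n) (g : GL (Fin n) F) {p : GL (Fin n) F}
    (hp : p ∈ Parabolic F n r) :
    colMinors hrn (g * p) = fun ρ => colMinors hrn g ρ * (Ablock r hrn p).det := by
  funext ρ
  rw [colMinors, colMinors, ← Matrix.det_mul]
  congr 1
  ext i j
  simp only [Matrix.submatrix_apply, Units.val_mul, Matrix.mul_apply]
  rw [← (blockEquiv n r hrn).sum_comp, Fintype.sum_sum_type]
  have hlower : ∀ k : Fin (n - r), (p : Matrix (Fin n) (Fin n) F)
      (blockEquiv n r hrn (Sum.inr k)) (Fin.castLE hrn j) = 0 :=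
    fun k => hp _ _ (by simp [blockEquiv]) j.isLt
  simp only [hlower, mul_zero, Finset.sum_const_zero, add_zero]
  rfl

noncomputable def parabolicCocycle [NormedField F] (hrn : r ≤ n) (g : GL (Fin n) F) : Fˣ :=
  haveI : Nonempty (Fin r → Fin n) := ⟨Fin.castLE hrn⟩
  Units.mk0 (maxNormCoord (colMinors hrn g)) (maxNormCoord_ne_zero (colMinors_ne_zero hrn g))

lemma parabolicCocycle_mul [NormedField F] (hrn : r ≤ n) (g : GL (Fin n) F) {p : GL (Fin n) F}
    (hp : p ∈ Parabolic F n r) :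
    parabolicCocycle hrn (g * p) = parabolicCocycle hrn g * AblockDetUnit hrn p hp := by
  have : Nonempty (Fin r → Fin n) := ⟨Fin.castLE hrn⟩
  ext
  simp only [parabolicCocycle, Units.val_mk0, Units.val_mul, colMinors_mul hrn g hp,
    maxNormCoord_mul _ (isUnit_det_blocks hrn hp).1.ne_zero]
  rfl

lemma continuous_parabolicCocycle [NormedField F] [IsUltrametricDist F] (hrn : r ≤ n) :
    Continuous (parabolicCocycle (F := F) hrn) := by
  have : Nonempty (Fin r → Fin n) := ⟨Fin.castLE hrn⟩
  rw [Units.isEmbedding_val₀.continuous_iff, continuous_iff_continuousAt]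
  exact fun g => (continuousAt_maxNormCoord (colMinors_ne_zero hrn g)).comp
    (continuous_colMinors hrn).continuousAt

end ParabolicCocycle

section BaerSumIso

variable {F : Type*} [NontriviallyNormedField F] [IsUltrametricDist F]
  [CompleteSpace F] [LocallyCompactSpace F] {n r : ℕ} (hrn : r ≤ n)
  {N : Type*} [AddCommGroup N] [TopologicalSpace N] [IsTopologicalAddGroup N]
  (lam mu : Fˣ → N)

lemma mem_SteinbergFns_of_mem_Etilde {Φ : GL (Fin n) F → N}
    (h : (Φ, 0) ∈ Etilde F n r hrn N lam) : Φ ∈ SteinbergFns F n r N :=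
  ⟨h.1, fun g p hp => by simpa using h.2 g p hp⟩

lemma sub_mem_Etilde {Q P : GL (Fin n) F → N} {k : ℤ}
    (hQ : (Q, k) ∈ Etilde F n r hrn N (lam + mu)) (hP : (P, k) ∈ Etilde F n r hrn N lam) :
    (Q - P, k) ∈ Etilde F n r hrn N mu := by
  refine ⟨hQ.1.sub hP.1, fun g p hp => ?_⟩
  change Q (g * p) - P (g * p) = (Q g - P g) + k • mu _
  rw [show Q (g * p) = _ from hQ.2 g p hp, show P (g * p) = _ from hP.2 g p hp, Pi.add_apply,
    smul_add]
  abel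

lemma comp_parabolicCocycle_mem_Etilde (hlamc : Continuous lam)
    (hlam : ∀ a b : Fˣ, lam (a * b) = lam a + lam b) :
    (fun g => lam (parabolicCocycle hrn g), 1) ∈ Etilde F n r hrn N lam :=
  ⟨hlamc.comp (continuous_parabolicCocycle hrn), fun g p hp => by
    simp only [parabolicCocycle_mul hrn g hp, hlam, one_zsmul]⟩

def EtildePull : AddSubgroup (↥(Etilde F n r hrn N lam) × ↥(Etilde F n r hrn N mu)) :=
  (BaerPull F n r hrn N lam mu).comap
    ((QuotientAddGroup.mk' _).prodMap (QuotientAddGroup.mk' _))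

lemma EtildePull.deg_eq (t : ↥(EtildePull hrn lam mu)) : t.1.1.1.2 = t.1.2.1.2 := t.2

def EtildePull.toBaerPull : ↥(EtildePull hrn lam mu) →+ ↥(BaerPull F n r hrn N lam mu) :=
  AddMonoidHom.addSubgroupComap _ _

lemma EtildePull.toBaerPull_surjective : Function.Surjective (EtildePull.toBaerPull hrn lam mu) :=
  AddMonoidHom.addSubgroupComap_surjective_of_surjective _ _
    (Prod.map_surjective.mpr ⟨QuotientAddGroup.mk_surjective, QuotientAddGroup.mk_surjective⟩)

def EtildePull.sum : ↥(EtildePull hrn lam mu) →+ Esp F n r hrn N (lam + mu) :=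
  (QuotientAddGroup.mk' _).comp
  { toFun := fun t => ⟨(t.1.1.1.1 + t.1.2.1.1, t.1.1.1.2),
      mem_Etilde_add F n r hrn N lam mu t.1.1.2 (by rw [EtildePull.deg_eq]; exact t.1.2.2)⟩
    map_zero' := Subtype.ext (Prod.ext (add_zero _) rfl)
    map_add' := fun a b => Subtype.ext (Prod.ext (add_add_add_comm _ _ _ _) rfl) }

lemma EtildePull.ker_toBaerPull_le :
    (EtildePull.toBaerPull hrn lam mu).ker ≤ (EtildePull.sum hrn lam mu).ker := by
  intro t ht
  have ht := AddMonoidHom.mem_ker.mp ht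
  obtain ⟨hk, c₁, hc₁⟩ := (QuotientAddGroup.eq_zero_iff t.1.1).mp (congrArg (·.1.1) ht)
  obtain ⟨-, c₂, hc₂⟩ := (QuotientAddGroup.eq_zero_iff t.1.2).mp (congrArg (·.1.2) ht)
  exact (QuotientAddGroup.eq_zero_iff _).mpr
    ⟨hk, c₁ + c₂, fun g => congrArg₂ (· + ·) (hc₁ g) (hc₂ g)⟩

noncomputable def baerAddHom : ↥(BaerPull F n r hrn N lam mu) →+ Esp F n r hrn N (lam + mu) :=
  (EtildePull.toBaerPull hrn lam mu).liftOfSurjective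
    (EtildePull.toBaerPull_surjective hrn lam mu)
    ⟨EtildePull.sum hrn lam mu, EtildePull.ker_toBaerPull_le hrn lam mu⟩

lemma baerAddHom_toBaerPull (t : ↥(EtildePull hrn lam mu)) :
    baerAddHom hrn lam mu (EtildePull.toBaerPull hrn lam mu t) = EtildePull.sum hrn lam mu t :=
  AddMonoidHom.liftOfRightInverse_comp_apply _ _ _ _ t

lemma ker_baerAddHom : (baerAddHom hrn lam mu).ker = BaerAnti F n r hrn N lam mu := by
  refine le_antisymm (fun x hx => ?_) ?_
  · obtain ⟨t, rfl⟩ := EtildePull.toBaerPull_surjective hrn lam mu x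
    rw [AddMonoidHom.mem_ker, baerAddHom_toBaerPull] at hx
    obtain ⟨hk, c, hc⟩ : t.1.1.1.2 = 0 ∧ ∃ c, ∀ g, t.1.1.1.1 g + t.1.2.1.1 g = c :=
      (QuotientAddGroup.eq_zero_iff _).mp hx
    let v : ↥(SteinbergFns F n r N) :=
      ⟨t.1.1.1.1, mem_SteinbergFns_of_mem_Etilde hrn lam (by rw [← hk]; exact t.1.1.2)⟩
    have hsum : t.1.2 + stIncl F n r hrn N mu v ∈ EtildeConsts F n r hrn N mu :=
      ⟨by simp [← EtildePull.deg_eq, hk, stIncl], c, fun g => (add_comm _ _).trans (hc g)⟩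
    refine ⟨v, Prod.ext ?_ ?_⟩
    · exact congrArg QuotientAddGroup.mk (Subtype.ext (Prod.ext rfl hk))
    · exact eq_neg_of_add_eq_zero_left ((QuotientAddGroup.eq_zero_iff (t.1.2 + _)).mpr hsum)
  · rintro x ⟨v, hv⟩
    have hx : x = EtildePull.toBaerPull hrn lam mu
        ⟨(stIncl F n r hrn N lam v, -stIncl F n r hrn N mu v), neg_zero.symm⟩ :=
      Subtype.ext (hv.trans (Prod.ext rfl (QuotientAddGroup.mk_neg _ _).symm))
    rw [AddMonoidHom.mem_ker, hx, baerAddHom_toBaerPull]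
    exact (QuotientAddGroup.eq_zero_iff _).mpr ⟨rfl, 0, fun g => add_neg_cancel (v.1 g)⟩

lemma baerAddHom_surjective {Φ₀ : GL (Fin n) F → N}
    (hΦ₀ : (Φ₀, 1) ∈ Etilde F n r hrn N lam) : Function.Surjective (baerAddHom hrn lam mu) := by
  intro y
  obtain ⟨q, rfl⟩ := QuotientAddGroup.mk_surjective y
  have hP : (q.1.2 • Φ₀, q.1.2) ∈ Etilde F n r hrn N lam := by
    simpa using (Etilde F n r hrn N lam).zsmul_mem hΦ₀ q.1.2
  let t : ↥(EtildePull hrn lam mu) := ⟨(⟨_, hP⟩, ⟨_, sub_mem_Etilde hrn lam mu q.2 hP⟩), rfl⟩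
  refine ⟨EtildePull.toBaerPull hrn lam mu t, ?_⟩
  rw [baerAddHom_toBaerPull]
  exact congrArg QuotientAddGroup.mk (Subtype.ext (Prod.ext (add_sub_cancel _ _) rfl))

lemma baerAddHom_baerTransAux (h : GL (Fin n) F) (x : ↥(BaerPull F n r hrn N lam mu)) :
    baerAddHom hrn lam mu (BaerTransAux F n r hrn N lam mu h x)
      = Etrans F n r hrn N (lam + mu) h (baerAddHom hrn lam mu x) := by
  obtain ⟨t, rfl⟩ := EtildePull.toBaerPull_surjective hrn lam mu x
  have ht : BaerTransAux F n r hrn N lam mu h (EtildePull.toBaerPull hrn lam mu t) =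
      EtildePull.toBaerPull hrn lam mu
        ⟨(EtransAux F n r hrn N lam h t.1.1, EtransAux F n r hrn N mu h t.1.2), t.2⟩ := rfl
  rw [ht, baerAddHom_toBaerPull, baerAddHom_toBaerPull]
  rfl

lemma Edeg_baerAddHom (x : ↥(BaerPull F n r hrn N lam mu)) :
    Edeg F n r hrn N (lam + mu) (baerAddHom hrn lam mu x) = Edeg F n r hrn N lam x.1.1 := by
  obtain ⟨t, rfl⟩ := EtildePull.toBaerPull_surjective hrn lam mu x
  rw [baerAddHom_toBaerPull]
  rfl

lemma baerAddHom_baerStAux (v : ↥(SteinbergFns F n r N)) :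
    baerAddHom hrn lam mu (BaerStAux F n r hrn N lam mu v) = stHom F n r hrn N (lam + mu) v := by
  have hv : BaerStAux F n r hrn N lam mu v =
      EtildePull.toBaerPull hrn lam mu ⟨(stIncl F n r hrn N lam v, 0), rfl⟩ := rfl
  rw [hv, baerAddHom_toBaerPull]
  exact congrArg QuotientAddGroup.mk (Subtype.ext (Prod.ext (add_zero _) rfl))

noncomputable def baerSumEquiv {Φ₀ : GL (Fin n) F → N}
    (hΦ₀ : (Φ₀, 1) ∈ Etilde F n r hrn N lam) :
    BaerSum F n r hrn N lam mu ≃+ Esp F n r hrn N (lam + mu) :=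
  (QuotientAddGroup.quotientAddEquivOfEq (ker_baerAddHom hrn lam mu).symm).trans
    (QuotientAddGroup.quotientKerEquivOfSurjective _ (baerAddHom_surjective hrn lam mu hΦ₀))

end BaerSumIso

theorem baerSum_iso_extension_add_general
    {F : Type*} [NontriviallyNormedField F] [IsUltrametricDist F]
    [CompleteSpace F] [LocallyCompactSpace F]
    {n r : ℕ} (hrlt : r < n)
    {N : Type*} [AddCommGroup N] [TopologicalSpace N] [IsTopologicalAddGroup N]
    (lam mu : Fˣ → N)
    (hlamc : Continuous lam) (hlam : ∀ a b : Fˣ, lam (a * b) = lam a + lam b) :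
    ∃ θ : BaerSum F n r hrlt.le N lam mu ≃+ Esp F n r hrlt.le N (lam + mu),
      (∀ (P1 P2 : GL (Fin n) F → N) (k : ℤ)
          (h1 : (P1, k) ∈ Etilde F n r hrlt.le N lam)
          (h2 : (P2, k) ∈ Etilde F n r hrlt.le N mu),
        θ (QuotientAddGroup.mk
            ⟨((QuotientAddGroup.mk ⟨(P1, k), h1⟩ : Esp F n r hrlt.le N lam),
              (QuotientAddGroup.mk ⟨(P2, k), h2⟩ : Esp F n r hrlt.le N mu)),
              mk_mem_BaerPull F n r hrlt.le N lam mu h1 h2⟩)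
          = QuotientAddGroup.mk ⟨(P1 + P2, k), mem_Etilde_add F n r hrlt.le N lam mu h1 h2⟩) ∧
      (∀ (h : GL (Fin n) F) (x : BaerSum F n r hrlt.le N lam mu),
        θ (BaerTrans F n r hrlt.le N lam mu h x)
          = Etrans F n r hrlt.le N (lam + mu) h (θ x)) ∧
      (∀ x : BaerSum F n r hrlt.le N lam mu,
        Edeg F n r hrlt.le N (lam + mu) (θ x) = BaerDeg F n r hrlt.le N lam mu x) ∧
      (∀ v : ↥(SteinbergFns F n r N),
        θ (BaerSt F n r hrlt.le N lam mu v) = stHom F n r hrlt.le N (lam + mu) v) := by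
  let θ := baerSumEquiv hrlt.le lam mu (comp_parabolicCocycle_mem_Etilde hrlt.le lam hlamc hlam)
  refine ⟨θ, fun P1 P2 k h1 h2 => ?_, fun h x => ?_, fun x => ?_, fun v => ?_⟩
  · exact baerAddHom_toBaerPull hrlt.le lam mu ⟨(⟨(P1, k), h1⟩, ⟨(P2, k), h2⟩), rfl⟩
  · induction x using QuotientAddGroup.induction_on with
    | H x => exact baerAddHom_baerTransAux hrlt.le lam mu h x
  · induction x using QuotientAddGroup.induction_on with
    | H x => exact Edeg_baerAddHom hrlt.le lam mu x
  · exact baerAddHom_baerStAux hrlt.le lam mu v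

/-- For continuous homomorphisms `λ, μ : F^× → N`, the assignment
`((Φ₁,k), (Φ₂,k)) ↦ (Φ₁+Φ₂, k)` induces a well-defined `GL_n(F)`-equivariant group
isomorphism from the Baer sum of `E(λ)` and `E(μ)` onto `E(λ+μ)`, commuting with the
degree maps to `ℤ` and with the inclusions of `v_r(N)`. -/
theorem baerSum_iso_extension_add
    {F : Type*} [NontriviallyNormedField F] [IsUltrametricDist F]
    [CompleteSpace F] [LocallyCompactSpace F]
    {n r : ℕ} (hn : 2 ≤ n) (hr : 0 < r) (hrlt : r < n)
    {N : Type*} [AddCommGroup N] [TopologicalSpace N] [IsTopologicalAddGroup N]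
    (lam mu : Fˣ → N)
    (hlamc : Continuous lam) (hlam : ∀ a b : Fˣ, lam (a * b) = lam a + lam b)
    (hmuc : Continuous mu) (hmu : ∀ a b : Fˣ, mu (a * b) = mu a + mu b) :
    ∃ θ : BaerSum F n r hrlt.le N lam mu ≃+ Esp F n r hrlt.le N (lam + mu),
      (∀ (P1 P2 : GL (Fin n) F → N) (k : ℤ)
          (h1 : (P1, k) ∈ Etilde F n r hrlt.le N lam)
          (h2 : (P2, k) ∈ Etilde F n r hrlt.le N mu),
        θ (QuotientAddGroup.mk
            ⟨((QuotientAddGroup.mk ⟨(P1, k), h1⟩ : Esp F n r hrlt.le N lam),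
              (QuotientAddGroup.mk ⟨(P2, k), h2⟩ : Esp F n r hrlt.le N mu)),
              mk_mem_BaerPull F n r hrlt.le N lam mu h1 h2⟩)
          = QuotientAddGroup.mk ⟨(P1 + P2, k), mem_Etilde_add F n r hrlt.le N lam mu h1 h2⟩) ∧
      (∀ (h : GL (Fin n) F) (x : BaerSum F n r hrlt.le N lam mu),
        θ (BaerTrans F n r hrlt.le N lam mu h x)
          = Etrans F n r hrlt.le N (lam + mu) h (θ x)) ∧
      (∀ x : BaerSum F n r hrlt.le N lam mu,
        Edeg F n r hrlt.le N (lam + mu) (θ x) = BaerDeg F n r hrlt.le N lam mu x) ∧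
      (∀ v : ↥(SteinbergFns F n r N),
        θ (BaerSt F n r hrlt.le N lam mu v) = stHom F n r hrlt.le N (lam + mu) v) :=
  baerSum_iso_extension_add_general hrlt lam mu hlamc hlam
end

section
/- Let λ : P → N be a continuous group homomorphism. The following are equivalent: (i) there exists a continuous map Φ : GL_n(F) → N such that Φ(g·p) = Φ(g) + λ(p) for all g ∈ GL_n(F) and p ∈ P, and such that for every g ∈ GL_n(F) there exists c(g) ∈ N with Φ(g·g') = c(g) + Φ(g') for all g' ∈ GL_n(F); (ii) λ extends to a continuous group homomorphism GL_n(F) → N. (Condition (i) says that the extension class b_λ of ℤ by v_r(N) determined by λ is split.) -/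
/-!
If every left translate of `Φ` differs from `Φ` by a constant, then `g ↦ Φ g - Φ 1` is a
homomorphism, and `Φ (g * p) = Φ g + λ p` at `g = 1` says that it extends `λ`. Conversely, a
continuous homomorphism extending `λ` is itself such a `Φ`.
-/

open Matrix

section LeftTranslate

variable {G N : Type*} [AddCommGroup N]

theorem map_mul_sub_map_one [Monoid G] {Φ : G → N}
    (hΦ : ∀ g : G, ∃ c : N, ∀ g' : G, Φ (g * g') = c + Φ g') (a b : G) :
    Φ (a * b) - Φ 1 = (Φ a - Φ 1) + (Φ b - Φ 1) := by
  obtain ⟨c, hc⟩ := hΦ a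
  have hc1 : Φ a = c + Φ 1 := by simpa using hc 1
  have hca : c = Φ a - Φ 1 := by rw [hc1]; abel
  rw [hc b, hca]
  abel

theorem exists_leftTranslate_const_iff_exists_extension [Group G] [TopologicalSpace G]
    [TopologicalSpace N] [IsTopologicalAddGroup N] (H : Subgroup G) (lam : H → N) :
    (∃ Φ : G → N, Continuous Φ ∧
        (∀ (g p : G) (hp : p ∈ H), Φ (g * p) = Φ g + lam ⟨p, hp⟩) ∧
        (∀ g : G, ∃ c : N, ∀ g' : G, Φ (g * g') = c + Φ g')) ↔
    (∃ Lam : G → N, Continuous Lam ∧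
        (∀ a b : G, Lam (a * b) = Lam a + Lam b) ∧
        ∀ p : H, Lam (p : G) = lam p) := by
  constructor
  · rintro ⟨Φ, hΦc, hΦH, hΦl⟩
    refine ⟨fun g => Φ g - Φ 1, by fun_prop, map_mul_sub_map_one hΦl, fun p => ?_⟩
    have h1p : Φ p = Φ 1 + lam p := by simpa using hΦH 1 p p.2
    simp only [h1p, add_sub_cancel_left]
  · rintro ⟨Lam, hLc, hLh, hLH⟩
    exact ⟨Lam, hLc, fun g p hp => by rw [hLh, hLH ⟨p, hp⟩], fun g => ⟨Lam g, hLh g⟩⟩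

end LeftTranslate

theorem extension_class_trivial_iff_extends_general
    {F : Type*} [NontriviallyNormedField F]
    {n r : ℕ}
    {N : Type*} [AddCommGroup N] [TopologicalSpace N] [IsTopologicalAddGroup N]
    (lam : ↥(Parabolic F n r) → N) :
    (∃ Φ : GL (Fin n) F → N, Continuous Φ ∧
        (∀ (g p : GL (Fin n) F) (hp : p ∈ Parabolic F n r), Φ (g * p) = Φ g + lam ⟨p, hp⟩) ∧
        (∀ g : GL (Fin n) F, ∃ c : N, ∀ g' : GL (Fin n) F, Φ (g * g') = c + Φ g')) ↔
    (∃ Lam : GL (Fin n) F → N, Continuous Lam ∧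
        (∀ a b : GL (Fin n) F, Lam (a * b) = Lam a + Lam b) ∧
        ∀ p : ↥(Parabolic F n r), Lam (p : GL (Fin n) F) = lam p) :=
  exists_leftTranslate_const_iff_exists_extension (Parabolic F n r) lam

/-- For a continuous homomorphism `λ : P → N`, the extension class `b_λ`
of `ℤ` by `v_r(N)` is split, i.e., there is a continuous `Φ : GL_n(F) → N` with
`Φ(g·p) = Φ(g) + λ(p)` whose left translates all differ from `Φ` by constants, if and only
if `λ` extends to a continuous homomorphism `GL_n(F) → N`. -/
theorem extension_class_trivial_iff_extends
    {F : Type*} [NontriviallyNormedField F] [IsUltrametricDist F]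
    [CompleteSpace F] [LocallyCompactSpace F]
    {n r : ℕ} (hn : 2 ≤ n) (hr : 0 < r) (hrn : r < n)
    {N : Type*} [AddCommGroup N] [TopologicalSpace N] [IsTopologicalAddGroup N]
    (lam : ↥(Parabolic F n r) → N) (hcont : Continuous lam)
    (hhom : ∀ p q : ↥(Parabolic F n r), lam (p * q) = lam p + lam q) :
    (∃ Φ : GL (Fin n) F → N, Continuous Φ ∧
        (∀ (g p : GL (Fin n) F) (hp : p ∈ Parabolic F n r), Φ (g * p) = Φ g + lam ⟨p, hp⟩) ∧
        (∀ g : GL (Fin n) F, ∃ c : N, ∀ g' : GL (Fin n) F, Φ (g * g') = c + Φ g')) ↔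
    (∃ Lam : GL (Fin n) F → N, Continuous Lam ∧
        (∀ a b : GL (Fin n) F, Lam (a * b) = Lam a + Lam b) ∧
        ∀ p : ↥(Parabolic F n r), Lam (p : GL (Fin n) F) = lam p) :=
  extension_class_trivial_iff_extends_general lam
end

section
/- Let λ₁, λ₂ : F^× → N be continuous group homomorphisms. There exists a continuous map Φ : GL_n(F) → N satisfying Φ(g·p) = Φ(g) + λ₁(det A_p) + λ₂(det D_p) for all g ∈ GL_n(F) and p ∈ P, and such that for every g ∈ GL_n(F) there exists c(g) ∈ N with Φ(g·g') = c(g) + Φ(g') for all g' ∈ GL_n(F), if and only if λ₁ = λ₂. (That is, the extension class b_{(λ₁,λ₂)} of ℤ by v_r(N) vanishes if and only if λ₁ = λ₂.) -/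
/-! If every left translate of `Φ` differs from `Φ` by a constant, then `Φ` is invariant under
conjugation. Conjugating the diagonal matrix with `u` in position `0` by the transposition
`(0 r)` gives the one with `u` in position `r`, and `P`-equivariance evaluates `Φ` on these two
matrices as `Φ 1 + λ₁ u` and `Φ 1 + λ₂ u`. Conversely, if `λ₁ = λ₂ = λ` then `λ ∘ det` works,
because `det p = det A_p · det D_p` on `P`. -/

open Matrix

lemma map_mul_mul_inv_eq_of_forall_exists_add {G N : Type*} [Group G] [AddCommSemigroup N]
    {Φ : G → N} (hΦ : ∀ g, ∃ c, ∀ g', Φ (g * g') = c + Φ g') (g x : G) :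
    Φ (g * x * g⁻¹) = Φ x := by
  obtain ⟨c, hc⟩ := hΦ g
  obtain ⟨d, hd⟩ := hΦ x
  calc Φ (g * x * g⁻¹) = c + (d + Φ g⁻¹) := by rw [mul_assoc, hc, hd]
    _ = d + (c + Φ g⁻¹) := by ac_rfl
    _ = Φ x := by rw [← hc, mul_inv_cancel, ← hd, mul_one]

section GeneralLinearGroup

variable {n R : Type*} [Fintype n] [DecidableEq n] [CommRing R]

def diagonalGL : (n → Rˣ) →* GL n R :=
  (Units.map (diagonalRingHom n R : (n → R) →* Matrix n n R)).comp
    MulEquiv.piUnits.symm.toMonoidHom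

def permGL : Equiv.Perm n →* GL n R :=
  (permMatrixHom (n := n) (R := R)).toHomUnits

@[simp]
lemma val_diagonalGL (d : n → Rˣ) :
    ((diagonalGL d : GL n R) : Matrix n n R) = diagonal fun i => (d i : R) := rfl

@[simp]
lemma val_permGL (σ : Equiv.Perm n) :
    ((permGL σ : GL n R) : Matrix n n R) = σ⁻¹.permMatrix R := rfl

lemma permGL_mul_diagonalGL_mul_inv (σ : Equiv.Perm n) (d : n → Rˣ) :
    permGL σ * diagonalGL d * (permGL σ)⁻¹ = (diagonalGL (d ∘ σ.symm) : GL n R) := by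
  ext1
  rw [← map_inv, Units.val_mul, Units.val_mul, val_permGL, val_permGL, inv_inv,
    PEquiv.toMatrix_toPEquiv_mul, PEquiv.mul_toMatrix_toPEquiv, submatrix_submatrix,
    val_diagonalGL, val_diagonalGL]
  exact submatrix_diagonal_equiv _ _

lemma map_diagonalGL_mulSingle_eq_of_forall_exists_add {N : Type*} [AddCommSemigroup N]
    {Φ : GL n R → N} (hΦ : ∀ g, ∃ c, ∀ g', Φ (g * g') = c + Φ g') (a b : n) (u : Rˣ) :
    Φ (diagonalGL (Pi.mulSingle a u)) = Φ (diagonalGL (Pi.mulSingle b u)) := by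
  rw [← map_mul_mul_inv_eq_of_forall_exists_add hΦ (permGL (Equiv.swap a b)),
    permGL_mul_diagonalGL_mul_inv, Pi.mulSingle_comp_equiv, Equiv.symm_symm,
    Equiv.swap_apply_left]

end GeneralLinearGroup

section Blocks

variable {F : Type*} [Field F] {n r : ℕ}

lemma det_eq_det_Ablock_mul_det_Dblock (h : r ≤ n) {g : GL (Fin n) F}
    (hg : g ∈ Parabolic F n r) :
    (g : Matrix (Fin n) (Fin n) F).det = (Ablock r h g).det * (Dblock r h g).det := by
  set M := (g : Matrix (Fin n) (Fin n) F).submatrix (blockEquiv n r h) (blockEquiv n r h)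
  have hM₂₁ : M.toBlocks₂₁ = 0 := by
    ext i j
    exact hg _ _ (by simp [blockEquiv]) (by simp [blockEquiv])
  rw [← det_submatrix_equiv_self (blockEquiv n r h)]
  change M.det = _
  rw [← fromBlocks_toBlocks M, hM₂₁, det_fromBlocks_zero₂₁]
  rfl

lemma GeneralLinearGroup.det_eq_AblockDetUnit_mul_DblockDetUnit (h : r ≤ n)
    {p : GL (Fin n) F} (hp : p ∈ Parabolic F n r) :
    GeneralLinearGroup.det p = AblockDetUnit h p hp * DblockDetUnit h p hp :=
  Units.ext <| by
    simpa [AblockDetUnit, DblockDetUnit] using det_eq_det_Ablock_mul_det_Dblock h hp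

lemma diagonalGL_mem_parabolic (d : Fin n → Fˣ) : diagonalGL d ∈ Parabolic F n r :=
  fun i j hi hj => diagonal_apply_ne _ (Fin.ne_of_val_ne (by omega))

lemma AblockDetUnit_diagonalGL (h : r ≤ n) (d : Fin n → Fˣ) :
    AblockDetUnit h (diagonalGL d) (diagonalGL_mem_parabolic d) =
      ∏ i, d (blockEquiv n r h (.inl i)) :=
  Units.ext <| by simp [AblockDetUnit, Ablock, submatrix_diagonal_equiv]

lemma DblockDetUnit_diagonalGL (h : r ≤ n) (d : Fin n → Fˣ) :
    DblockDetUnit h (diagonalGL d) (diagonalGL_mem_parabolic d) =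
      ∏ j, d (blockEquiv n r h (.inr j)) :=
  Units.ext <| by simp [DblockDetUnit, Dblock, submatrix_diagonal_equiv]

lemma AblockDetUnit_diagonalGL_mulSingle (h : r ≤ n) (x : Fin r ⊕ Fin (n - r)) (u : Fˣ) :
    AblockDetUnit h (diagonalGL (Pi.mulSingle (blockEquiv n r h x) u))
      (diagonalGL_mem_parabolic _) = x.elim (fun _ => u) (fun _ => 1) := by
  cases x <;> simp [AblockDetUnit_diagonalGL, Pi.mulSingle_apply]

lemma DblockDetUnit_diagonalGL_mulSingle (h : r ≤ n) (x : Fin r ⊕ Fin (n - r)) (u : Fˣ) :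
    DblockDetUnit h (diagonalGL (Pi.mulSingle (blockEquiv n r h x) u))
      (diagonalGL_mem_parabolic _) = x.elim (fun _ => 1) (fun _ => u) := by
  cases x <;> simp [DblockDetUnit_diagonalGL, Pi.mulSingle_apply]

end Blocks

theorem extension_class_vanishes_iff_eq_general
    {F : Type*} [NontriviallyNormedField F]
    {n r : ℕ} (hr : 0 < r) (hrn : r < n)
    {N : Type*} [AddCommGroup N] [TopologicalSpace N]
    (l₁ l₂ : Fˣ → N) (h₁c : Continuous l₁) (h₁ : ∀ a b : Fˣ, l₁ (a * b) = l₁ a + l₁ b)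
    (h₂ : ∀ a b : Fˣ, l₂ (a * b) = l₂ a + l₂ b) :
    (∃ Φ : GL (Fin n) F → N, Continuous Φ ∧
      (∀ (g p : GL (Fin n) F) (hp : p ∈ Parabolic F n r),
        Φ (g * p) = Φ g + l₁ (AblockDetUnit hrn.le p hp) + l₂ (DblockDetUnit hrn.le p hp)) ∧
      (∀ g : GL (Fin n) F, ∃ c : N, ∀ g' : GL (Fin n) F, Φ (g * g') = c + Φ g')) ↔
    l₁ = l₂ := by
  constructor
  · rintro ⟨Φ, -, hP, hL⟩
    funext u
    have hΦ (x : Fin r ⊕ Fin (n - r)) :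
        Φ (diagonalGL (Pi.mulSingle (blockEquiv n r hrn.le x) u)) = Φ 1 +
          l₁ (x.elim (fun _ => u) (fun _ => 1)) + l₂ (x.elim (fun _ => 1) (fun _ => u)) := by
      rw [← AblockDetUnit_diagonalGL_mulSingle hrn.le, ← DblockDetUnit_diagonalGL_mulSingle hrn.le,
        ← hP, one_mul]
    have key := map_diagonalGL_mulSingle_eq_of_forall_exists_add hL
      (blockEquiv n r hrn.le (.inl ⟨0, hr⟩))
      (blockEquiv n r hrn.le (.inr ⟨0, Nat.sub_pos_of_lt hrn⟩)) u
    have hl₁ : l₁ 1 = 0 := by simpa using h₁ 1 1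
    have hl₂ : l₂ 1 = 0 := by simpa using h₂ 1 1
    simpa [hΦ, hl₁, hl₂] using key
  · rintro rfl
    refine ⟨fun g => l₁ (GeneralLinearGroup.det g), h₁c.comp GeneralLinearGroup.continuous_det,
      fun g p hp => ?_, fun g => ⟨l₁ (GeneralLinearGroup.det g), fun g' => ?_⟩⟩
    · simp only [map_mul, GeneralLinearGroup.det_eq_AblockDetUnit_mul_DblockDetUnit hrn.le hp,
        h₁, add_assoc]
    · simp only [map_mul, h₁]

/-- For continuous homomorphisms `λ₁, λ₂ : F^× → N`, the extension class
`b_{(λ₁,λ₂)}` of `ℤ` by `v_r(N)` is split — i.e. there is a continuous `Φ : GL_n(F) → N`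
with `Φ(g·p) = Φ(g) + λ₁(det A_p) + λ₂(det D_p)` whose left translates differ from `Φ` by
constants — if and only if `λ₁ = λ₂`. -/
theorem extension_class_vanishes_iff_eq
    {F : Type*} [NontriviallyNormedField F] [IsUltrametricDist F]
    [CompleteSpace F] [LocallyCompactSpace F]
    {n r : ℕ} (hn : 2 ≤ n) (hr : 0 < r) (hrn : r < n)
    {N : Type*} [AddCommGroup N] [TopologicalSpace N] [IsTopologicalAddGroup N]
    (l₁ l₂ : Fˣ → N) (h₁c : Continuous l₁) (h₁ : ∀ a b : Fˣ, l₁ (a * b) = l₁ a + l₁ b)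
    (h₂c : Continuous l₂) (h₂ : ∀ a b : Fˣ, l₂ (a * b) = l₂ a + l₂ b) :
    (∃ Φ : GL (Fin n) F → N, Continuous Φ ∧
      (∀ (g p : GL (Fin n) F) (hp : p ∈ Parabolic F n r),
        Φ (g * p) = Φ g + l₁ (AblockDetUnit hrn.le p hp) + l₂ (DblockDetUnit hrn.le p hp)) ∧
      (∀ g : GL (Fin n) F, ∃ c : N, ∀ g' : GL (Fin n) F, Φ (g * g') = c + Φ g')) ↔
    l₁ = l₂ :=
  extension_class_vanishes_iff_eq_general hr hrn l₁ l₂ h₁c h₁ h₂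
end

section
/- Let z : Ω̃(E) → ℤ be a finitely supported function with Σ_v z(v) = 0, and define f_z : V*∖{0} → E^× by f_z(ℓ) = Π_v ℓ_E(v)^{z(v)} (a finite product of nonzero elements of E, with integer exponents). Then: (1) f_z(c·ℓ) = f_z(ℓ) for every c ∈ F^× and every nonzero ℓ ∈ V*, so f_z descends to the projective space ℙ(V*)(F); (2) if z' is obtained from z by replacing each v in the support by e_v·v with e_v ∈ E^× (i.e., z'(e_v·v) = z(v)), then there is a constant C ∈ E^×, independent of ℓ, with f_{z'}(ℓ) = C·f_z(ℓ) for all nonzero ℓ ∈ V*; (3) for g ∈ GL(V), letting g·z denote the pushforward of z along v ↦ (g⊗1)v, one has f_{g·z}(ℓ) = f_z(ℓ∘g) for all nonzero ℓ ∈ V*. Consequently z ↦ (class of f_z) is a well-defined GL(V)-equivariant homomorphism Ψ⁰ from degree-zero cycles on Ω̃(E) modulo rescaling of lifts to the group of functions ℙ(V*)(F) → E^× modulo constants. -/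
/-!
`ℓ_E(v)` is `F`-linear in `ℓ` and `E`-linear in `v`, so rescaling `ℓ` by `c ∈ F^×` multiplies
`f_z` by `c ^ deg z = 1`, and rescaling each `v` by `e_v` multiplies it by the constant
`∏ e_v ^ z(v)`; moreover `ℓ_E ∘ (g ⊗ 1) = (ℓ ∘ g)_E`. Pushing `z` forward along a
non-injective map adds exponents at a common point, which is harmless because every `ℓ_E(v)`
with `v ∈ Ω̃(E)` is nonzero.
-/

open TensorProduct

variable (F : Type*) [Field F] (E : Type*) [Field E] [Algebra F E]
  (V : Type*) [AddCommGroup V] [Module F V]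

/-- The base change `ℓ_E : V ⊗_F E → E` of a linear functional `ℓ : V → F` (with the base
change realized as `E ⊗[F] V`). -/
noncomputable def dualBC (l : V →ₗ[F] F) : E ⊗[F] V →ₗ[F] E :=
  (TensorProduct.rid F E).toLinearMap ∘ₗ TensorProduct.map LinearMap.id l

/-- The action of an `F`-linear automorphism `g` of `V` on the base change `V ⊗_F E`,
i.e. `g ⊗ 1`. -/
noncomputable def tensAct (g : V ≃ₗ[F] V) : E ⊗[F] V →ₗ[F] E ⊗[F] V :=
  TensorProduct.map LinearMap.id (g : V →ₗ[F] V)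

/-- The lifts of `E`-points of Drinfeld's upper half space: vectors `v ∈ V ⊗_F E` with
`ℓ_E(v) ≠ 0` for every nonzero functional `ℓ ∈ V*`. -/
def OmegaLifts : Set (E ⊗[F] V) :=
  {v | ∀ l : V →ₗ[F] F, l ≠ 0 → dualBC F E V l v ≠ 0}

/-- The function `Φ_v : GL(V) → E`, `g ↦ ℓ₀,E((g⁻¹ ⊗ 1)v) / ℓ₀,E(v)`. -/
noncomputable def PhiFun (l₀ : V →ₗ[F] F) (v : E ⊗[F] V) (g : V ≃ₗ[F] V) : E :=
  dualBC F E V l₀ (tensAct F E V g⁻¹ v) / dualBC F E V l₀ v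

/-- The multiplicative cocycle `f_z(ℓ) = ∏_v ℓ_E(v)^{z(v)}` attached to a finitely
supported `ℤ`-valued cycle `z` on `V ⊗_F E`. -/
noncomputable def cycleFun (z : (E ⊗[F] V) →₀ ℤ) (l : V →ₗ[F] F) : E :=
  z.prod fun v k => dualBC F E V l v ^ k

namespace Finsupp

variable {α β G₀ : Type*} [CommGroupWithZero G₀]

lemma prod_zpow_ne_zero {z : α →₀ ℤ} {φ : α → G₀} (hφ : ∀ v ∈ z.support, φ v ≠ 0) :
    z.prod (fun v k => φ v ^ k) ≠ 0 :=
  prod_ne_zero_iff.mpr fun v hv => zpow_ne_zero _ (hφ v hv)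

lemma prod_zpow_const (z : α →₀ ℤ) {a : G₀} (ha : a ≠ 0) :
    z.prod (fun _ k => a ^ k) = a ^ z.sum (fun _ k => k) := by
  induction z using Finsupp.induction with
  | zero => simp
  | single_add v k z _ _ ih =>
    rw [prod_add_index' (fun _ => zpow_zero a) (fun _ _ _ => zpow_add₀ ha _ _),
      sum_add_index' (fun _ => rfl) (fun _ _ _ => rfl), ih, zpow_add₀ ha]
    simp

lemma prod_mapDomain_zpow (f : α → β) (z : α →₀ ℤ) {φ : β → G₀}
    (hφ : ∀ v ∈ z.support, φ (f v) ≠ 0) :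
    (z.mapDomain f).prod (fun b k => φ b ^ k) = z.prod (fun v k => φ (f v) ^ k) := by
  classical
  -- `φ'` agrees with `φ` on the image of the support and is nonzero everywhere, so that
  -- `k ↦ φ' b ^ k` is additive in the exponent, as `prod_mapDomain_index` requires.
  set φ' : β → G₀ := fun b => if φ b = 0 then 1 else φ b
  have hφ'_ne : ∀ b, φ' b ≠ 0 := fun b => by
    by_cases hb : φ b = 0 <;> simp [φ', hb]
  have hφ'_eq : ∀ v ∈ z.support, φ' (f v) = φ (f v) := fun v hv => if_neg (hφ v hv)
  calc (z.mapDomain f).prod (fun b k => φ b ^ k)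
      = (z.mapDomain f).prod (fun b k => φ' b ^ k) := prod_congr fun b hb => by
        obtain ⟨v, hv, rfl⟩ := Finset.mem_image.mp (mapDomain_support hb)
        rw [hφ'_eq v hv]
    _ = z.prod (fun v k => φ' (f v) ^ k) :=
        prod_mapDomain_index (fun _ => zpow_zero _) (fun b _ _ => zpow_add₀ (hφ'_ne b) _ _)
    _ = z.prod (fun v k => φ (f v) ^ k) := prod_congr fun v hv => by rw [hφ'_eq v hv]

end Finsupp

section BaseChange

variable {F : Type*} [Field F] {E : Type*} [Field E] [Algebra F E]
  {V : Type*} [AddCommGroup V] [Module F V]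

@[simp]
lemma dualBC_tmul (l : V →ₗ[F] F) (x : E) (y : V) :
    dualBC F E V l (x ⊗ₜ[F] y) = algebraMap F E (l y) * x := by
  simp [dualBC, Algebra.smul_def]

lemma dualBC_smul_apply (c : F) (l : V →ₗ[F] F) (v : E ⊗[F] V) :
    dualBC F E V (c • l) v = algebraMap F E c * dualBC F E V l v := by
  induction v using TensorProduct.induction_on with
  | zero => simp
  | tmul x y => simp only [dualBC_tmul, LinearMap.smul_apply, smul_eq_mul, map_mul]; ring
  | add a b ha hb => simp only [map_add, ha, hb, mul_add]

lemma dualBC_map_smul (l : V →ₗ[F] F) (e : E) (v : E ⊗[F] V) :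
    dualBC F E V l (e • v) = e * dualBC F E V l v := by
  induction v using TensorProduct.induction_on with
  | zero => simp
  | tmul x y => rw [smul_tmul', dualBC_tmul, dualBC_tmul, smul_eq_mul]; ring
  | add a b ha hb => simp only [smul_add, map_add, ha, hb, mul_add]

lemma dualBC_tensAct (g : V ≃ₗ[F] V) (l : V →ₗ[F] F) (v : E ⊗[F] V) :
    dualBC F E V l (tensAct F E V g v) = dualBC F E V (l ∘ₗ (g : V →ₗ[F] V)) v := by
  induction v using TensorProduct.induction_on with
  | zero => simp
  | tmul x y => simp [tensAct]
  | add a b ha hb => simp only [map_add, ha, hb]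

lemma tensAct_injective (g : V ≃ₗ[F] V) : Function.Injective (tensAct F E V g) :=
  (map_bijective Function.bijective_id g.bijective).injective

lemma cycleFun_ne_zero {z : (E ⊗[F] V) →₀ ℤ} (hsupp : ∀ v ∈ z.support, v ∈ OmegaLifts F E V)
    {l : V →ₗ[F] F} (hl : l ≠ 0) : cycleFun F E V z l ≠ 0 :=
  Finsupp.prod_zpow_ne_zero fun v hv => hsupp v hv l hl

lemma cycleFun_smul {z : (E ⊗[F] V) →₀ ℤ} (hdeg : (z.sum fun _ k => k) = 0) {c : F} (hc : c ≠ 0)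
    (l : V →ₗ[F] F) : cycleFun F E V z (c • l) = cycleFun F E V z l := by
  have hc' : algebraMap F E c ≠ 0 := (map_ne_zero _).mpr hc
  simp only [cycleFun, dualBC_smul_apply, mul_zpow, Finsupp.prod_mul,
    Finsupp.prod_zpow_const z hc', hdeg, zpow_zero, one_mul]

lemma cycleFun_mapDomain_smul {z : (E ⊗[F] V) →₀ ℤ}
    (hsupp : ∀ v ∈ z.support, v ∈ OmegaLifts F E V) (e : E ⊗[F] V → Eˣ)
    {l : V →ₗ[F] F} (hl : l ≠ 0) :
    cycleFun F E V (z.mapDomain fun v => (e v : E) • v) l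
      = z.prod (fun v k => (e v : E) ^ k) * cycleFun F E V z l := by
  rw [cycleFun, Finsupp.prod_mapDomain_zpow _ _ fun v hv => by
    rw [dualBC_map_smul]; exact mul_ne_zero (e v).ne_zero (hsupp v hv l hl)]
  simp only [dualBC_map_smul, mul_zpow, Finsupp.prod_mul, cycleFun]

lemma cycleFun_mapDomain_tensAct (z : (E ⊗[F] V) →₀ ℤ) (g : V ≃ₗ[F] V) (l : V →ₗ[F] F) :
    cycleFun F E V (z.mapDomain (tensAct F E V g)) l
      = cycleFun F E V z (l ∘ₗ (g : V →ₗ[F] V)) := by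
  simp only [cycleFun, Finsupp.prod_mapDomain_index_inj (tensAct_injective g), dualBC_tensAct]

end BaseChange

theorem cycleFun_well_defined_and_equivariant_general
    {F : Type*} [Field F] {E : Type*} [Field E] [Algebra F E]
    {V : Type*} [AddCommGroup V] [Module F V]
    (z : (E ⊗[F] V) →₀ ℤ)
    (hsupp : ∀ v ∈ z.support, v ∈ OmegaLifts F E V)
    (hdeg : (z.sum fun _ k => k) = 0) :
    (∀ l : V →ₗ[F] F, l ≠ 0 → cycleFun F E V z l ≠ 0) ∧
    (∀ c : F, c ≠ 0 → ∀ l : V →ₗ[F] F, l ≠ 0 →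
      cycleFun F E V z (c • l) = cycleFun F E V z l) ∧
    (∀ e : (E ⊗[F] V) → Eˣ, ∃ C : E, C ≠ 0 ∧ ∀ l : V →ₗ[F] F, l ≠ 0 →
      cycleFun F E V (Finsupp.mapDomain (fun v => (e v : E) • v) z) l
        = C * cycleFun F E V z l) ∧
    (∀ g : V ≃ₗ[F] V, ∀ l : V →ₗ[F] F, l ≠ 0 →
      cycleFun F E V (Finsupp.mapDomain (tensAct F E V g) z) l
        = cycleFun F E V z (l ∘ₗ (g : V →ₗ[F] V))) :=
  ⟨fun _ hl => cycleFun_ne_zero hsupp hl,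
    fun _ hc l _ => cycleFun_smul hdeg hc l,
    fun e => ⟨_, Finsupp.prod_zpow_ne_zero fun v _ => (e v).ne_zero,
      fun _ hl => cycleFun_mapDomain_smul hsupp e hl⟩,
    fun g l _ => cycleFun_mapDomain_tensAct z g l⟩

/-- For a degree-zero cycle `z` supported on lifts of `E`-points of
Drinfeld's upper half space: the values `f_z(ℓ)` are nonzero; (1) `f_z` is invariant under
`F^×`-rescaling of `ℓ`, so descends to `ℙ(V*)(F)`; (2) rescaling the lifts in the support
changes `f_z` by a constant in `E^×`; (3) `f_{g·z}(ℓ) = f_z(ℓ∘g)`; so that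
`z ↦ (class of f_z)` is a well-defined `GL(V)`-equivariant homomorphism `Ψ⁰`. -/
theorem cycleFun_well_defined_and_equivariant
    {F : Type*} [Field F] {E : Type*} [Field E] [Algebra F E]
    {V : Type*} [AddCommGroup V] [Module F V] [FiniteDimensional F V]
    (hdim : 2 ≤ Module.finrank F V)
    (z : (E ⊗[F] V) →₀ ℤ)
    (hsupp : ∀ v ∈ z.support, v ∈ OmegaLifts F E V)
    (hdeg : (z.sum fun _ k => k) = 0) :
    (∀ l : V →ₗ[F] F, l ≠ 0 → cycleFun F E V z l ≠ 0) ∧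
    (∀ c : F, c ≠ 0 → ∀ l : V →ₗ[F] F, l ≠ 0 →
      cycleFun F E V z (c • l) = cycleFun F E V z l) ∧
    (∀ e : (E ⊗[F] V) → Eˣ, ∃ C : E, C ≠ 0 ∧ ∀ l : V →ₗ[F] F, l ≠ 0 →
      cycleFun F E V (Finsupp.mapDomain (fun v => (e v : E) • v) z) l
        = C * cycleFun F E V z l) ∧
    (∀ g : V ≃ₗ[F] V, ∀ l : V →ₗ[F] F, l ≠ 0 →
      cycleFun F E V (Finsupp.mapDomain (tensAct F E V g) z) l
        = cycleFun F E V z (l ∘ₗ (g : V →ₗ[F] V))) :=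
  cycleFun_well_defined_and_equivariant_general z hsupp hdeg
end

section
/- The map sending a continuous group homomorphism λ' : F^× → N to the composite λ' ∘ det : GL_n(F) → N is a bijection from the set of continuous group homomorphisms F^× → N onto the set of continuous group homomorphisms GL_n(F) → N. In particular, every continuous group homomorphism λ : GL_n(F) → N factors as λ = λ' ∘ det for a unique continuous homomorphism λ' : F^× → N. -/
/-!
A homomorphism `φ` from a group to a commutative group is invariant under conjugation. Conjugating
the transvection `1 + c E_ij` by the dilation `diag(1, …, u, …, 1)` (with `u` in slot `i`)
rescales `c` to `u c`; choosing `u ≠ 0, 1`, additivity in `c` gives `φ(t) = φ(t)²` for every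
transvection `t`, so `φ` kills transvections. Conjugating by permutation matrices shows that all
coordinate dilations with the same entry have the same image, so `φ` of a diagonal matrix `D` is
`φ(diag(det D, 1, …, 1))`. As `GL_n(F)` is generated by transvections and diagonal matrices,
`φ g = φ(diag(det g, 1, …, 1))` for all `g`, so `a ↦ φ(diag(a, 1, …, 1))` is the unique
factorization of `φ` through `det`, and it is continuous because `a ↦ diag(a, 1, …, 1)` is.
-/

theorem MonoidHom.map_conj_eq {G A : Type*} [Group G] [CommGroup A] (φ : G →* A) (g x : G) :
    φ (g * x * g⁻¹) = φ x := by
  rw [map_mul, map_mul, map_inv, mul_inv_cancel_comm]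

namespace Matrix.GeneralLinearGroup

variable {n R : Type*} [Fintype n] [DecidableEq n] [CommRing R]

def diagonalHom : (n → Rˣ) →* GL n R :=
  (Units.map (diagonalRingHom n R : (n → R) →* Matrix n n R)).comp
    (MulEquiv.piUnits (M := fun _ : n => R)).symm.toMonoidHom

lemma det_diagonalHom (d : n → Rˣ) : det (diagonalHom d) = ∏ k, d k := by
  ext
  simp [diagonalHom, Units.coe_prod]

lemma continuous_diagonalHom [TopologicalSpace R] :
    Continuous (diagonalHom : (n → Rˣ) → GL n R) :=
  (Continuous.units_map _ continuous_id.matrix_diagonal).comp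
    (ContinuousMulEquiv.piUnits (M := fun _ : n => R)).symm.continuous

def dilation (i : n) : Rˣ →* GL n R :=
  diagonalHom.comp (MonoidHom.mulSingle (fun _ : n => Rˣ) i)

lemma coe_dilation (i : n) (a : Rˣ) :
    (dilation i a : Matrix n n R) = diagonal fun k => ((Pi.mulSingle i a : n → Rˣ) k : R) :=
  rfl

lemma det_dilation (i : n) (a : Rˣ) : det (dilation i a) = a := by
  simp [dilation, det_diagonalHom, Pi.mulSingle_apply]

lemma continuous_dilation [TopologicalSpace R] (i : n) :
    Continuous (dilation i : Rˣ → GL n R) :=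
  continuous_diagonalHom.comp (continuous_mulSingle (A := fun _ : n => Rˣ) i)

lemma swap_mul_dilation_mul_swap_inv (i j : n) (a : Rˣ) :
    swap R i j * dilation i a * (swap R i j)⁻¹ = dilation j a := by
  ext : 1
  change Matrix.swap R i j * _ * Matrix.swap R i j = _
  rw [coe_dilation, coe_dilation, Matrix.swap, Equiv.Perm.permMatrix,
    PEquiv.toMatrix_toPEquiv_mul, PEquiv.mul_toMatrix_toPEquiv, submatrix_submatrix,
    Function.comp_id, Function.id_comp, Equiv.symm_swap, submatrix_diagonal_equiv]
  congr 1
  ext k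
  simp [Pi.mulSingle_apply, Equiv.swap_apply_eq_iff]

lemma dilation_mul_transvection_mul_dilation_inv {i j : n} (hij : i ≠ j) (u : Rˣ) (c : R) :
    dilation i u * (SpecialLinearGroup.transvection hij c : GL n R) * (dilation i u)⁻¹
      = SpecialLinearGroup.transvection hij (u * c) := by
  rw [← map_inv]
  ext a b : 2
  simp only [Units.val_mul, coe_dilation, SpecialLinearGroup.coe_GL_coe_matrix,
    SpecialLinearGroup.transvection_coe, diagonal_mul, mul_diagonal, Pi.mulSingle_apply,
    Matrix.add_apply, Matrix.single_apply, Matrix.one_apply]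
  split_ifs <;> subst_vars <;> simp_all

section CommGroupValued

variable {A : Type*} [CommGroup A]

lemma map_dilation_eq (φ : GL n R →* A) (i j : n) (a : Rˣ) :
    φ (dilation i a) = φ (dilation j a) := by
  rw [← swap_mul_dilation_mul_swap_inv i j a, φ.map_conj_eq]

lemma map_diagonalHom (φ : GL n R →* A) (i : n) (d : n → Rˣ) :
    φ (diagonalHom d) = φ (dilation i (∏ k, d k)) := by
  calc φ (diagonalHom d) = (φ.comp diagonalHom) (∏ k, Pi.mulSingle k (d k)) := by
        rw [Finset.univ_prod_mulSingle]; rfl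
    _ = ∏ k, φ (dilation i (d k)) := by
        rw [map_prod]
        exact Finset.prod_congr rfl fun k _ => map_dilation_eq φ k i (d k)
    _ = φ (dilation i (∏ k, d k)) := by
        rw [← MonoidHom.comp_apply, map_prod]; rfl

lemma map_transvection_eq_one_s10 (φ : GL n R →* A) {u : Rˣ} (hu : IsUnit ((u : R) - 1))
    {i j : n} (hij : i ≠ j) (c : R) :
    φ (SpecialLinearGroup.transvection hij c) = 1 := by
  set τ : R → A := fun c => φ (SpecialLinearGroup.transvection hij c : GL n R)
  have scale (v : Rˣ) : τ (v * c) = τ c := by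
    simp only [τ]
    rw [← dilation_mul_transvection_mul_dilation_inv, φ.map_conj_eq]
  have : τ c * τ c = τ c := calc
    τ c * τ c = τ c * τ (hu.unit * c) := by rw [scale]
    _ = τ (u * c) := by
        simp only [τ, IsUnit.unit_spec, ← map_mul, ← SpecialLinearGroup.transvection_add]
        ring_nf
    _ = τ c := scale u
  exact mul_eq_left.mp this

theorem map_eq_map_dilation_det {F : Type*} [Field F] (φ : GL n F →* A) {u : F} (hu₀ : u ≠ 0)
    (hu₁ : u ≠ 1) (i : n) (g : GL n F) :
    φ g = φ (dilation i (det g)) := by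
  let P (M : Matrix n n F) : Prop :=
    ∀ g : GL n F, (g : Matrix n n F) = M → φ g = φ (dilation i (det g))
  refine diagonal_transvection_induction_of_det_ne_zero P g g.det_ne_zero ?diagonal
    ?transvection ?mul g rfl
  case diagonal =>
    intro D hD g hg
    have hD₀ (k : n) : D k ≠ 0 := by
      rw [det_diagonal, Finset.prod_ne_zero_iff] at hD
      exact hD k (Finset.mem_univ k)
    obtain rfl : g = diagonalHom fun k => Units.mk0 (D k) (hD₀ k) := Units.ext hg
    rw [map_diagonalHom φ i, det_diagonalHom]
  case transvection =>
    intro t g hg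
    obtain rfl : g = (SpecialLinearGroup.transvection t.hij t.c : GL n F) := Units.ext hg
    have hu : IsUnit ((Units.mk0 u hu₀ : F) - 1) := (sub_ne_zero.mpr hu₁).isUnit
    rw [map_transvection_eq_one_s10 φ hu, SpecialLinearGroup.coeToGL_det, map_one, map_one]
  case mul =>
    intro A B hA hB ihA ihB g hg
    obtain rfl : g = mkOfDetNeZero A hA * mkOfDetNeZero B hB := Units.ext hg
    rw [map_mul, ihA (mkOfDetNeZero A hA) rfl, ihB (mkOfDetNeZero B hB) rfl, ← map_mul,
      ← map_mul, ← map_mul]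

end CommGroupValued

end Matrix.GeneralLinearGroup

open Matrix.GeneralLinearGroup in
theorem continuousHom_from_GL_factors_through_det_general
    {F : Type*} [NontriviallyNormedField F]
    {n : ℕ} (hn : 2 ≤ n)
    {N : Type*} [AddCommGroup N] [TopologicalSpace N] :
    (∀ l : Fˣ → N, Continuous l → (∀ a b : Fˣ, l (a * b) = l a + l b) →
      Continuous (fun g : GL (Fin n) F => l (Matrix.GeneralLinearGroup.det g)) ∧
      ∀ g h : GL (Fin n) F,
        l (Matrix.GeneralLinearGroup.det (g * h))
          = l (Matrix.GeneralLinearGroup.det g) + l (Matrix.GeneralLinearGroup.det h)) ∧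
    (∀ L : GL (Fin n) F → N, Continuous L → (∀ g h : GL (Fin n) F, L (g * h) = L g + L h) →
      ∃! l : Fˣ → N, (Continuous l ∧ ∀ a b : Fˣ, l (a * b) = l a + l b) ∧
        ∀ g : GL (Fin n) F, L g = l (Matrix.GeneralLinearGroup.det g)) := by
  refine ⟨fun l hl hl_mul => ⟨hl.comp Matrix.GeneralLinearGroup.continuous_det,
    fun g h => by rw [map_mul, hl_mul]⟩, fun L hL hL_mul => ?_⟩
  obtain ⟨u, hu⟩ := NormedField.exists_one_lt_norm F
  have hu₀ : u ≠ 0 := by rintro rfl; simp at hu; linarith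
  have hu₁ : u ≠ 1 := by rintro rfl; simp at hu
  let i₀ : Fin n := ⟨0, by omega⟩
  let φ : GL (Fin n) F →* Multiplicative N := MonoidHom.mk' (fun g => .ofAdd (L g)) hL_mul
  refine ⟨fun a => L (dilation i₀ a), ⟨⟨hL.comp (continuous_dilation i₀), fun a b => by
    simp only [map_mul, hL_mul]⟩, map_eq_map_dilation_det φ hu₀ hu₁ i₀⟩, ?_⟩
  rintro l ⟨-, hl⟩
  funext a
  rw [hl, det_dilation]

/-- Composition with the determinant is a bijection from the set of
continuous homomorphisms `F^× → N` onto the set of continuous homomorphisms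
`GL_n(F) → N`: composing a continuous homomorphism on `F^×` with `det` always yields a
continuous homomorphism on `GL_n(F)`, and every continuous homomorphism `GL_n(F) → N`
factors through `det` in a unique way. -/
theorem continuousHom_from_GL_factors_through_det
    {F : Type*} [NontriviallyNormedField F] [IsUltrametricDist F]
    [CompleteSpace F] [LocallyCompactSpace F]
    {n : ℕ} (hn : 2 ≤ n)
    {N : Type*} [AddCommGroup N] [TopologicalSpace N] [IsTopologicalAddGroup N] :
    (∀ l : Fˣ → N, Continuous l → (∀ a b : Fˣ, l (a * b) = l a + l b) →
      Continuous (fun g : GL (Fin n) F => l (Matrix.GeneralLinearGroup.det g)) ∧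
      ∀ g h : GL (Fin n) F,
        l (Matrix.GeneralLinearGroup.det (g * h))
          = l (Matrix.GeneralLinearGroup.det g) + l (Matrix.GeneralLinearGroup.det h)) ∧
    (∀ L : GL (Fin n) F → N, Continuous L → (∀ g h : GL (Fin n) F, L (g * h) = L g + L h) →
      ∃! l : Fˣ → N, (Continuous l ∧ ∀ a b : Fˣ, l (a * b) = l a + l b) ∧
        ∀ g : GL (Fin n) F, L g = l (Matrix.GeneralLinearGroup.det g)) :=
  continuousHom_from_GL_factors_through_det_general hn
end

section
/- Let B be an abelian group, regarded as a discrete topological group. The canonical homomorphism C(X,ℤ) ⊗_ℤ B → C(X,B), determined by sending f ⊗ b to the continuous function x ↦ f(x)·b, is an isomorphism of abelian groups. (Here ℤ carries the discrete topology, so C(X,ℤ) is the group of locally constant ℤ-valued functions on X.) -/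
open TensorProduct

instance discrete_continuousConstSMul (R B : Type*) [TopologicalSpace B] [DiscreteTopology B]
    [SMul R B] : ContinuousConstSMul R B :=
  ⟨fun _ => continuous_of_discreteTopology⟩


/-- Indicator function of a clopen set as a continuous map. -/
noncomputable def chiFun {X : Type*} [TopologicalSpace X] (U : Set X) (hU : IsClopen U) :
    C(X, ℤ) :=
  ⟨U.indicator fun _ => 1, by
    classical
    have : (U.indicator fun _ => (1:ℤ)) = fun x => if x ∈ U then 1 else 0 := by
      ext x; by_cases h : x ∈ U <;> simp [h]
    rw [this]
    apply Continuous.if _ continuous_const continuous_const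
    intro a ha
    rw [show {x | x ∈ U} = U from rfl, hU.frontier_eq] at ha
    exact absurd ha (Set.notMem_empty a)⟩

theorem chiFun_of_mem {X : Type*} [TopologicalSpace X] {U : Set X} (hU : IsClopen U) {x : X}
    (hx : x ∈ U) : chiFun U hU x = 1 := by
  simp only [chiFun, ContinuousMap.coe_mk]; exact Set.indicator_of_mem hx _

theorem chiFun_of_notMem {X : Type*} [TopologicalSpace X] {U : Set X} (hU : IsClopen U) {x : X}
    (hx : x ∉ U) : chiFun U hU x = 0 := by
  simp only [chiFun, ContinuousMap.coe_mk]; exact Set.indicator_of_notMem hx _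


/-- The canonical bilinear pairing `C(X,ℤ) × B → C(X,B)`, `(f, b) ↦ (x ↦ f(x)·b)`,
for `B` a discrete abelian group. -/
noncomputable def smulPairing (X : Type*) [TopologicalSpace X]
    (B : Type*) [AddCommGroup B] [TopologicalSpace B] [DiscreteTopology B] :
    C(X, ℤ) →ₗ[ℤ] B →ₗ[ℤ] C(X, B) :=
  LinearMap.mk₂ ℤ
    (fun f b => ⟨fun x => f x • b,
      (continuous_of_discreteTopology (f := fun k : ℤ => k • b)).comp f.continuous⟩)
    (fun f g b => ContinuousMap.ext fun x => by
      show (f x + g x) • b = f x • b + g x • b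
      rw [add_smul])
    (fun c f b => ContinuousMap.ext fun x => by
      show (c * f x) • b = c • (f x • b)
      rw [mul_smul])
    (fun f b b' => ContinuousMap.ext fun x => by
      show f x • (b + b') = f x • b + f x • b'
      rw [smul_add])
    (fun c f b => ContinuousMap.ext fun x => by
      show f x • (c • b) = c • (f x • b)
      rw [smul_comm])

/-- The canonical homomorphism `C(X,ℤ) ⊗_ℤ B → C(X,B)`, `f ⊗ b ↦ (x ↦ f(x)·b)`. -/
noncomputable def canonTensorMap (X : Type*) [TopologicalSpace X]
    (B : Type*) [AddCommGroup B] [TopologicalSpace B] [DiscreteTopology B] :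
    C(X, ℤ) ⊗[ℤ] B →ₗ[ℤ] C(X, B) :=
  TensorProduct.lift (smulPairing X B)

theorem canonTensorMap_tmul_apply (X : Type*) [TopologicalSpace X]
    (B : Type*) [AddCommGroup B] [TopologicalSpace B] [DiscreteTopology B]
    (f : C(X, ℤ)) (b : B) (x : X) :
    canonTensorMap X B (f ⊗ₜ[ℤ] b) x = f x • b := rfl

theorem canonTensorMap_ker
    (X : Type*) [TopologicalSpace X] [CompactSpace X]
    (B : Type*) [AddCommGroup B] [TopologicalSpace B] [DiscreteTopology B]
    (t : C(X, ℤ) ⊗[ℤ] B) (ht : canonTensorMap X B t = 0) : t = 0 := by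
  classical
  obtain ⟨S, rfl⟩ := TensorProduct.exists_finset t
  set φ : X → (S → ℤ) := fun x p => (p : C(X, ℤ) × B).1 x with hφdef
  have hφc : Continuous φ := continuous_pi fun p => (p : C(X, ℤ) × B).1.continuous
  have hclopen : ∀ v : S → ℤ, IsClopen (φ ⁻¹' {v}) := fun v =>
    (isClopen_discrete {v}).preimage hφc
  have hfin : (Set.range φ).Finite := (isCompact_range hφc).finite_of_discrete
  set V := hfin.toFinset with hVdef
  have hdecomp : ∀ p : S, (p : C(X, ℤ) × B).1
      = ∑ v ∈ V, v p • chiFun (φ ⁻¹' {v}) (hclopen v) := by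
    intro p
    ext x
    rw [ContinuousMap.coe_sum, Finset.sum_apply]
    rw [Finset.sum_eq_single (φ x)]
    · rw [ContinuousMap.coe_smul, Pi.smul_apply,
        chiFun_of_mem _ (by simp [Set.mem_preimage]), smul_eq_mul, mul_one]
    · intro v _ hv
      rw [ContinuousMap.coe_smul, Pi.smul_apply,
        chiFun_of_notMem _ (by simp [Set.mem_preimage, hv.symm]), smul_zero]
    · intro h
      exact absurd (hfin.mem_toFinset.2 ⟨x, rfl⟩) h
  have hrw : (∑ p ∈ S, p.1 ⊗ₜ[ℤ] p.2)
      = ∑ v ∈ V, chiFun (φ ⁻¹' {v}) (hclopen v) ⊗ₜ[ℤ]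
          (∑ p ∈ S.attach, v p • (p : C(X, ℤ) × B).2) := by
    rw [← Finset.sum_attach S fun p => p.1 ⊗ₜ[ℤ] p.2]
    calc ∑ p ∈ S.attach, (p : C(X, ℤ) × B).1 ⊗ₜ[ℤ] (p : C(X, ℤ) × B).2
        = ∑ p ∈ S.attach, (∑ v ∈ V, v p • chiFun (φ ⁻¹' {v}) (hclopen v)) ⊗ₜ[ℤ]
            (p : C(X, ℤ) × B).2 := by
          refine Finset.sum_congr rfl fun p _ => ?_
          rw [← hdecomp p]
      _ = ∑ p ∈ S.attach, ∑ v ∈ V, chiFun (φ ⁻¹' {v}) (hclopen v) ⊗ₜ[ℤ]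
            (v p • (p : C(X, ℤ) × B).2) := by
          refine Finset.sum_congr rfl fun p _ => ?_
          rw [TensorProduct.sum_tmul]
          exact Finset.sum_congr rfl fun v _ => by rw [TensorProduct.smul_tmul]
      _ = ∑ v ∈ V, chiFun (φ ⁻¹' {v}) (hclopen v) ⊗ₜ[ℤ]
            (∑ p ∈ S.attach, v p • (p : C(X, ℤ) × B).2) := by
          rw [Finset.sum_comm]
          exact Finset.sum_congr rfl fun v _ => (TensorProduct.tmul_sum _ _ _).symm
  rw [hrw]
  refine Finset.sum_eq_zero fun v hv => ?_
  obtain ⟨x, hx⟩ := hfin.mem_toFinset.1 hv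
  have hzero : (∑ p ∈ S.attach, v p • (p : C(X, ℤ) × B).2) = 0 := by
    have h0 := congrArg (fun g : C(X, B) => g x) ht
    simp only [ContinuousMap.zero_apply] at h0
    rw [map_sum] at h0
    rw [← Finset.sum_attach S (fun p => canonTensorMap X B (p.1 ⊗ₜ[ℤ] p.2))] at h0
    rw [ContinuousMap.coe_sum, Finset.sum_apply] at h0
    rw [← h0]
    refine Finset.sum_congr rfl fun p _ => ?_
    rw [canonTensorMap_tmul_apply]
    have hvp : v p = (p : C(X, ℤ) × B).1 x := by rw [← hx]
    rw [hvp]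
  rw [hzero, TensorProduct.tmul_zero]

theorem canonTensorMap_surj
    (X : Type*) [TopologicalSpace X] [CompactSpace X]
    (B : Type*) [AddCommGroup B] [TopologicalSpace B] [DiscreteTopology B] :
    Function.Surjective (canonTensorMap X B) := by
  classical
  intro g
  have hfin : (Set.range g).Finite := (isCompact_range g.continuous).finite_of_discrete
  have hclopen : ∀ b : B, IsClopen (g ⁻¹' {b}) := fun b =>
    (isClopen_discrete _).preimage g.continuous
  refine ⟨∑ b ∈ hfin.toFinset, chiFun (g ⁻¹' {b}) (hclopen b) ⊗ₜ[ℤ] b, ?_⟩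
  ext x
  rw [map_sum, ContinuousMap.coe_sum, Finset.sum_apply]
  rw [Finset.sum_eq_single (g x)]
  · rw [canonTensorMap_tmul_apply, chiFun_of_mem _ (by simp), one_smul]
  · intro b _ hb
    rw [canonTensorMap_tmul_apply, chiFun_of_notMem _ (by simp [hb.symm]), zero_smul]
  · intro h
    exact absurd (hfin.mem_toFinset.2 ⟨x, rfl⟩) h

/-- For `X` a compact Hausdorff totally disconnected space and `B` an
abelian group with the discrete topology, the canonical homomorphism
`C(X,ℤ) ⊗_ℤ B → C(X,B)`, `f ⊗ b ↦ (x ↦ f(x)·b)`, is an isomorphism of abelian groups. -/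
theorem canonTensorMap_bijective
    (X : Type*) [TopologicalSpace X] [CompactSpace X] [T2Space X]
    [TotallyDisconnectedSpace X]
    (B : Type*) [AddCommGroup B] [TopologicalSpace B] [DiscreteTopology B] :
    Function.Bijective (canonTensorMap X B) :=
  ⟨(injective_iff_map_eq_zero _).mpr (canonTensorMap_ker X B), canonTensorMap_surj X B⟩
end
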